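/- arXiv:2506.21773 — 7 statements merged into one kernel-verified Lean document; each statement's English description precedes it below -/
import Mathlib

section
/- Let S be a ℤ[t^±]-module. There is a bijection between the set of symmetric, translation-invariant, local Z-bilinear forms b : S × S → ℚ/ℤ and the set of ℤ[t^±]-sesquilinear Hermitian forms B : S × S → 𝒬 (Laurent polynomials over ℚ/ℤ), given by b ↦ B_b where B_b(x,y) = Σ_{m∈ℤ} b(t^m x, y) t^m, with inverse B ↦ b_B where b_B(x,y) is the coefficient of t^0 in B(x,y). Moreover b is nondegenerate if and only if B_b is nondegenerate. -/
open LaurentPolynomial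

namespace Stmt4

/-- `ℚ/ℤ`. -/
abbrev QZ := AddCircle (1 : ℚ)

/-- `𝒬`: Laurent polynomials with coefficients in `ℚ/ℤ`, encoded as finitely supported
functions `ℤ →₀ ℚ/ℤ` (the value at `m` is the coefficient of `t^m`). -/
abbrev Qlp := ℤ →₀ QZ

variable (S : Type*) [AddCommGroup S] [Module (LaurentPolynomial ℤ) S]

/-- A symmetric, translation-invariant, local `ℤ`-bilinear form `S × S → ℚ/ℤ`. -/
def GoodForm (b : S → S → QZ) : Prop :=
  (∀ x x' y : S, b (x + x') y = b x y + b x' y) ∧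
  (∀ x y y' : S, b x (y + y') = b x y + b x y') ∧
  (∀ x y : S, b x y = b y x) ∧
  (∀ (k : ℤ) (x y : S),
    b ((T k : LaurentPolynomial ℤ) • x) ((T k : LaurentPolynomial ℤ) • y) = b x y) ∧
  (∀ x y : S, ∃ ℓ : ℕ, ∀ k : ℤ, (ℓ : ℤ) ≤ |k| → b ((T k : LaurentPolynomial ℤ) • x) y = 0)

/-- A `ℤ[t^±]`-sesquilinear Hermitian form `S × S → 𝒬` (antilinear in the first variable,
linear in the second, for the involution `t ↦ t⁻¹`).  Multiplication by `t^k` on `𝒬` is the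
shift `Finsupp.mapDomain (· + k)`, and the involution on `𝒬` is `Finsupp.mapDomain (-·)`. -/
def HermForm (B : S → S → Qlp) : Prop :=
  (∀ x x' y : S, B (x + x') y = B x y + B x' y) ∧
  (∀ x y y' : S, B x (y + y') = B x y + B x y') ∧
  (∀ (k : ℤ) (x y : S),
    B ((T k : LaurentPolynomial ℤ) • x) y = Finsupp.mapDomain (· - k) (B x y)) ∧
  (∀ (k : ℤ) (x y : S),
    B x ((T k : LaurentPolynomial ℤ) • y) = Finsupp.mapDomain (· + k) (B x y)) ∧
  (∀ x y : S, B x y = Finsupp.mapDomain (fun m => -m) (B y x))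

/-- Nondegeneracy of a `ℚ/ℤ`-valued form. -/
def Nondeg (b : S → S → QZ) : Prop :=
  (∀ x : S, x ≠ 0 → ∃ y : S, b x y ≠ 0) ∧ (∀ y : S, y ≠ 0 → ∃ x : S, b x y ≠ 0)

/-- Nondegeneracy of a `𝒬`-valued form. -/
def NondegQ (B : S → S → Qlp) : Prop :=
  (∀ x : S, x ≠ 0 → ∃ y : S, B x y ≠ 0) ∧ (∀ y : S, y ≠ 0 → ∃ x : S, B x y ≠ 0)

/-!
Translation invariance moves shifts across: `b (t^m x, y) = b (x, t^{-m} y)`. This turns the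
symmetry of `b` into Hermitian symmetry of `B_b`, and locality of `b` is exactly finiteness of the
support of `B_b (x, y)`. Conversely the `t^0`-coefficient of `B (t^m x, y)` is the
`t^m`-coefficient of `B (x, y)`, so the two constructions are mutually inverse. Nondegeneracy
transfers because `B_b (x, y) ≠ 0` iff `b (t^m x, y) = b (x, t^{-m} y) ≠ 0` for some `m`.
-/

section Shifts

variable {G M : Type*} [AddGroup G] [AddCommMonoid M]

lemma _root_.Finsupp.mapDomain_sub_right_apply (k : G) (g : G →₀ M) (m : G) :
    Finsupp.mapDomain (· - k) g m = g (m + k) :=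
  Finsupp.mapDomain_equiv_apply (f := Equiv.subRight k) g m

lemma _root_.Finsupp.mapDomain_add_right_apply (k : G) (g : G →₀ M) (m : G) :
    Finsupp.mapDomain (· + k) g m = g (m - k) := by
  simpa [sub_eq_add_neg] using Finsupp.mapDomain_equiv_apply (f := Equiv.addRight k) g m

lemma _root_.Finsupp.mapDomain_neg_apply (g : G →₀ M) (m : G) :
    Finsupp.mapDomain (fun n => -n) g m = g (-m) :=
  Finsupp.mapDomain_equiv_apply (f := Equiv.neg G) g m

end Shifts

lemma _root_.Int.finite_support_iff_exists_forall_abs_ge {M : Type*} [Zero M] (f : ℤ → M) :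
    (Function.support f).Finite ↔ ∃ ℓ : ℕ, ∀ k : ℤ, (ℓ : ℤ) ≤ |k| → f k = 0 := by
  constructor
  · intro hf
    obtain ⟨N, hN⟩ := (hf.image Int.natAbs).bddAbove
    refine ⟨N + 1, fun k hk => ?_⟩
    by_contra hfk
    have : k.natAbs ≤ N := hN ⟨k, hfk, rfl⟩
    rw [Int.abs_eq_natAbs] at hk
    omega
  · rintro ⟨ℓ, hℓ⟩
    refine (Set.finite_Ioo (-(ℓ : ℤ)) ℓ).subset fun k hk => ?_
    by_contra hkℓ
    refine hk (hℓ k ?_)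
    rw [Set.mem_Ioo, not_and_or, not_lt, not_lt] at hkℓ
    rcases abs_cases k with ⟨h, _⟩ | ⟨h, _⟩ <;> omega

lemma _root_.LaurentPolynomial.T_smul_T_smul {R N : Type*} [Semiring R] [AddCommMonoid N]
    [Module R[T;T⁻¹] N] (k m : ℤ) (x : N) :
    (T k : R[T;T⁻¹]) • (T m : R[T;T⁻¹]) • x = (T (k + m) : R[T;T⁻¹]) • x := by
  rw [smul_smul, ← T_add]

lemma _root_.LaurentPolynomial.T_zero_smul {R N : Type*} [Semiring R] [AddCommMonoid N]
    [Module R[T;T⁻¹] N] (x : N) : (T 0 : R[T;T⁻¹]) • x = x := by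
  rw [T_zero, one_smul]

variable {S}

namespace GoodForm

variable {b : S → S → QZ} (hb : GoodForm S b)
include hb

lemma apply_T_smul_left (m : ℤ) (x y : S) :
    b ((T m : ℤ[T;T⁻¹]) • x) y = b x ((T (-m) : ℤ[T;T⁻¹]) • y) := by
  conv_rhs => rw [← hb.2.2.2.1 m, T_smul_T_smul, add_neg_cancel, T_zero_smul]

/-- The form `B_b`. -/
noncomputable def toHerm (x y : S) : Qlp :=
  Finsupp.ofSupportFinite (fun m => b ((T m : ℤ[T;T⁻¹]) • x) y)
    ((Int.finite_support_iff_exists_forall_abs_ge _).2 (hb.2.2.2.2 x y))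

lemma toHerm_apply (x y : S) (m : ℤ) : hb.toHerm x y m = b ((T m : ℤ[T;T⁻¹]) • x) y := rfl

lemma hermForm_toHerm : HermForm S hb.toHerm := by
  obtain ⟨hadd_left, hadd_right, hsymm, htrans, -⟩ := id hb
  refine ⟨fun x x' y => ?_, fun x y y' => ?_, fun k x y => ?_, fun k x y => ?_, fun x y => ?_⟩ <;>
    ext m
  · simp only [Finsupp.coe_add, Pi.add_apply, toHerm_apply, smul_add, hadd_left]
  · simp only [Finsupp.coe_add, Pi.add_apply, toHerm_apply, hadd_right]
  · rw [toHerm_apply, Finsupp.mapDomain_sub_right_apply, toHerm_apply, T_smul_T_smul]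
  · rw [toHerm_apply, Finsupp.mapDomain_add_right_apply, toHerm_apply, ← htrans (-k),
      T_smul_T_smul, T_smul_T_smul, neg_add_cancel, T_zero_smul, neg_add_eq_sub]
  · rw [toHerm_apply, Finsupp.mapDomain_neg_apply, toHerm_apply, hsymm, hb.apply_T_smul_left,
      neg_neg]

lemma toHerm_ne_zero_iff (x y : S) :
    hb.toHerm x y ≠ 0 ↔ ∃ m : ℤ, b ((T m : ℤ[T;T⁻¹]) • x) y ≠ 0 :=
  DFunLike.ne_iff

lemma toHerm_ne_zero_of_ne_zero {x y : S} (h : b x y ≠ 0) : hb.toHerm x y ≠ 0 :=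
  (hb.toHerm_ne_zero_iff x y).2 ⟨0, by rwa [T_zero_smul]⟩

lemma exists_toHerm_ne_zero_left_iff (x : S) :
    (∃ y, hb.toHerm x y ≠ 0) ↔ ∃ y, b x y ≠ 0 := by
  refine ⟨fun ⟨y, hy⟩ => ?_, fun ⟨y, hy⟩ => ⟨y, hb.toHerm_ne_zero_of_ne_zero hy⟩⟩
  obtain ⟨m, hm⟩ := (hb.toHerm_ne_zero_iff x y).1 hy
  exact ⟨_, hb.apply_T_smul_left m x y ▸ hm⟩

lemma exists_toHerm_ne_zero_right_iff (y : S) :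
    (∃ x, hb.toHerm x y ≠ 0) ↔ ∃ x, b x y ≠ 0 := by
  refine ⟨fun ⟨x, hx⟩ => ?_, fun ⟨x, hx⟩ => ⟨x, hb.toHerm_ne_zero_of_ne_zero hx⟩⟩
  obtain ⟨m, hm⟩ := (hb.toHerm_ne_zero_iff x y).1 hx
  exact ⟨_, hm⟩

lemma nondeg_iff_nondegQ_toHerm : Nondeg S b ↔ NondegQ S hb.toHerm := by
  simp only [Nondeg, NondegQ, hb.exists_toHerm_ne_zero_left_iff,
    hb.exists_toHerm_ne_zero_right_iff]

end GoodForm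

namespace HermForm

variable {B : S → S → Qlp} (hB : HermForm S B)
include hB

lemma apply_T_smul_left_zero (m : ℤ) (x y : S) : B ((T m : ℤ[T;T⁻¹]) • x) y 0 = B x y m := by
  rw [hB.2.2.1, Finsupp.mapDomain_sub_right_apply, zero_add]

lemma goodForm_apply_zero : GoodForm S (fun x y => B x y 0) := by
  obtain ⟨hadd_left, hadd_right, hT_left, hT_right, hherm⟩ := id hB
  refine ⟨fun x x' y => ?_, fun x y y' => ?_, fun x y => ?_, fun k x y => ?_, fun x y => ?_⟩ <;>
    dsimp only
  · simp only [hadd_left, Finsupp.coe_add, Pi.add_apply]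
  · simp only [hadd_right, Finsupp.coe_add, Pi.add_apply]
  · rw [hherm, Finsupp.mapDomain_neg_apply, neg_zero]
  · rw [hT_left, Finsupp.mapDomain_sub_right_apply, hT_right, Finsupp.mapDomain_add_right_apply,
      zero_add, sub_self]
  · simp only [hB.apply_T_smul_left_zero]
    exact (Int.finite_support_iff_exists_forall_abs_ge _).1 (B x y).hasFiniteSupport

end HermForm

variable (S) in
noncomputable def goodFormEquivHermForm :
    {b : S → S → QZ // GoodForm S b} ≃ {B : S → S → Qlp // HermForm S B} where
  toFun b := ⟨b.2.toHerm, b.2.hermForm_toHerm⟩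
  invFun B := ⟨fun x y => B.1 x y 0, B.2.goodForm_apply_zero⟩
  left_inv b := Subtype.ext <| funext₂ fun x y => by
    simp only [GoodForm.toHerm_apply, T_zero_smul]
  right_inv B := Subtype.ext <| funext₂ fun x y => Finsupp.ext fun m =>
    B.2.apply_T_smul_left_zero m x y

/-- Let `S` be a `ℤ[t^±]`-module.  There is a bijection between the set of
symmetric, translation-invariant, local `ℤ`-bilinear forms `b : S × S → ℚ/ℤ` and the set of
`ℤ[t^±]`-sesquilinear Hermitian forms `B : S × S → 𝒬`, given by `b ↦ B_b` where the
coefficient of `t^m` in `B_b (x, y)` is `b (t^m • x, y)`, with inverse `B ↦ b_B` where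
`b_B (x, y)` is the coefficient of `t^0` in `B (x, y)`.  Moreover `b` is nondegenerate if and
only if `B_b` is nondegenerate. -/
theorem stmt4 :
    ∃ e : {b : S → S → QZ // GoodForm S b} ≃ {B : S → S → Qlp // HermForm S B},
      (∀ (b : {b : S → S → QZ // GoodForm S b}) (x y : S) (m : ℤ),
        ((e b : {B : S → S → Qlp // HermForm S B}).1 x y) m
          = b.1 ((T m : LaurentPolynomial ℤ) • x) y) ∧
      (∀ (B : {B : S → S → Qlp // HermForm S B}) (x y : S),
        (e.symm B).1 x y = (B.1 x y) 0) ∧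
      (∀ b : {b : S → S → QZ // GoodForm S b},
        Nondeg S b.1 ↔ NondegQ S (e b).1) :=
  ⟨goodFormEquivHermForm S, fun _ _ _ _ => rfl, fun _ _ _ => rfl,
    fun b => b.2.nondeg_iff_nondegQ_toHerm⟩

end Stmt4
end

section
/- Let (S,θ) be a finite-order theory of excitations with compactified quadratic form θ_N : S_N → ℚ/ℤ defined by θ_N(ρ(x)) = θ(x) + Σ_{m>0} b(x, t^{mN} x). Then θ_N is well-defined (independent of representative x of the class ρ(x) ∈ S_N = S/(1−t^N)S), is a translation-invariant quadratic form, and its associated bilinear form is b_N(ρ(x),ρ(y)) = Σ_{m∈ℤ} b(t^{mN} x, y). -/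
open LaurentPolynomial

namespace Stmt6

/-- `ℚ/ℤ`. -/
abbrev QZ := AddCircle (1 : ℚ)

/-- `𝒵 = ℤ[t^±]`. -/
abbrev Zl := LaurentPolynomial ℤ

/-- The submodule `I_N S = (1 - t^N) S` of a `ℤ[t^±]`-module `S`. -/
noncomputable def IN (S : Type*) [AddCommGroup S] [Module Zl S] (N : ℕ) : Submodule Zl S :=
  LinearMap.range (((1 : Zl) - T (N : ℤ)) • (LinearMap.id : S →ₗ[Zl] S))

/-!
Write `tail x y = Σ_{m>0} b (x, t^{mN} y)` (`compactTail`), so that `θ_N = θ + tail (·, ·)`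
on `S` (`compactQuad`), and let `b_N` be `compactForm`. Locality makes every sum finite, and
translation invariance of `b` turns the terms `m < 0` of `b_N (x, y)` into `tail x y`, giving
`b_N (x, y) = b (x, y) + tail y x + tail x y`: this is the polarization of `θ_N`.
Reindexing `m ↦ m + 1` shows `b_N (t^N x, y) = b_N (x, y)`, so `b_N` vanishes on `(1 - t^N) S`,
and then so does `θ_N`, since `θ_N (t^N s) = θ_N s`. Hence `θ_N` descends to `S_N`.
-/

theorem finsum_int_eq_zero_add_finsum_nat {M : Type*} [AddCommGroup M] {f : ℤ → M}
    (hf : f.HasFiniteSupport) :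
    ∑ᶠ n : ℤ, f n = f 0 + ∑ᶠ n : ℕ, (f (n + 1) + f (-(n + 1))) := by
  let _ : TopologicalSpace M := ⊥
  have _ : DiscreteTopology M := ⟨rfl⟩
  have hpos : (fun n : ℕ => f (n + 1)).HasFiniteSupport :=
    hf.comp_of_injective ((add_left_injective 1).comp Nat.cast_injective)
  have hneg : (fun n : ℕ => f (-(n + 1))).HasFiniteSupport :=
    hf.comp_of_injective (neg_injective.comp ((add_left_injective 1).comp Nat.cast_injective))
  rw [finsum_add_distrib hpos hneg, ← tsum_eq_finsum (L := .unconditional _) hf,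
    ← tsum_eq_finsum (L := .unconditional _) hpos,
    ← tsum_eq_finsum (L := .unconditional _) hneg,
    tsum_of_add_one_of_neg_add_one (summable_of_hasFiniteSupport hpos)
      (summable_of_hasFiniteSupport hneg)]
  abel

section

variable {S : Type*} [AddCommGroup S] [Module Zl S]

theorem mem_IN {N : ℕ} {u : S} :
    u ∈ IN S N ↔ ∃ s : S, s - (T N : Zl) • s = u := by
  simp only [IN, LinearMap.mem_range, sub_smul, one_smul, LinearMap.sub_apply,
    LinearMap.smul_apply, LinearMap.id_apply]

theorem apply_T_smul_of_invariant {M : Type*} {f : S → M} (hf : ∀ x, f ((T 1 : Zl) • x) = f x)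
    (k : ℤ) (x : S) : f ((T k : Zl) • x) = f x := by
  induction k using Int.induction_on generalizing x with
  | zero => rw [T_zero, one_smul]
  | succ i ih => rw [add_comm, T_add, mul_smul, hf, ih]
  | pred i ih =>
    rw [← hf, ← mul_smul, ← T_add, add_sub_cancel, ih]

structure IsLocalQuadraticForm (θ : S → QZ) (b : S → S → QZ) : Prop where
  polar : ∀ x y, b x y = θ (x + y) - θ x - θ y
  add_left : ∀ x x' y, b (x + x') y = b x y + b x' y
  self : ∀ x, b x x = (2 : ℤ) • θ x
  T_one_smul : ∀ x, θ ((T 1 : Zl) • x) = θ x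
  locality : ∀ x y, ∃ ℓ : ℕ, ∀ k : ℤ, (ℓ : ℤ) ≤ |k| → b ((T k : Zl) • x) y = 0

variable (θ : S → QZ) (b : S → S → QZ) (N : ℕ)

noncomputable def compactTail (x y : S) : QZ :=
  ∑ᶠ m : ℕ, b x ((T (((m : ℤ) + 1) * (N : ℤ)) : Zl) • y)

noncomputable def compactQuad (x : S) : QZ :=
  θ x + compactTail b N x x

noncomputable def compactForm (x y : S) : QZ :=
  ∑ᶠ m : ℤ, b ((T (m * (N : ℤ)) : Zl) • x) y

variable {θ b N}

theorem compactForm_T_smul_left (x y : S) :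
    compactForm b N ((T N : Zl) • x) y = compactForm b N x y := by
  unfold compactForm
  conv_rhs => rw [← finsum_comp_equiv (Equiv.addRight (1 : ℤ))]
  refine finsum_congr fun m => ?_
  rw [smul_smul, ← T_add, Equiv.coe_addRight, add_mul, one_mul]

namespace IsLocalQuadraticForm

theorem comm (h : IsLocalQuadraticForm θ b) (x y : S) : b x y = b y x := by
  rw [h.polar, h.polar, add_comm y x]
  abel

theorem add_right (h : IsLocalQuadraticForm θ b) (x y y' : S) :
    b x (y + y') = b x y + b x y' := by
  rw [h.comm, h.add_left, h.comm y, h.comm y']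

theorem apply_add (h : IsLocalQuadraticForm θ b) (x y : S) : θ (x + y) = θ x + θ y + b x y := by
  rw [h.polar]
  abel

theorem apply_T_smul (h : IsLocalQuadraticForm θ b) (k : ℤ) (x : S) :
    θ ((T k : Zl) • x) = θ x :=
  apply_T_smul_of_invariant h.T_one_smul k x

theorem T_smul_T_smul (h : IsLocalQuadraticForm θ b) (k : ℤ) (x y : S) :
    b ((T k : Zl) • x) ((T k : Zl) • y) = b x y := by
  rw [h.polar, h.polar, ← smul_add, h.apply_T_smul, h.apply_T_smul, h.apply_T_smul]

theorem T_smul_left (h : IsLocalQuadraticForm θ b) (k : ℤ) (x y : S) :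
    b ((T k : Zl) • x) y = b x ((T (-k) : Zl) • y) := by
  rw [← h.T_smul_T_smul (-k), ← mul_smul, ← T_add, neg_add_cancel, T_zero, one_smul]

theorem hasFiniteSupport_T_smul_left (h : IsLocalQuadraticForm θ b) (x y : S) :
    (fun k : ℤ => b ((T k : Zl) • x) y).HasFiniteSupport := by
  obtain ⟨ℓ, hℓ⟩ := h.locality x y
  refine (Set.finite_Ioo (-(ℓ : ℤ)) ℓ).subset fun k hk => ?_
  exact abs_lt.mp (lt_of_not_ge fun hkℓ => hk (hℓ k hkℓ))

theorem hasFiniteSupport_T_smul_right (h : IsLocalQuadraticForm θ b) (x y : S) :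
    (fun k : ℤ => b x ((T k : Zl) • y)).HasFiniteSupport := by
  simpa only [h.comm x] using h.hasFiniteSupport_T_smul_left y x

theorem hasFiniteSupport_compactForm (h : IsLocalQuadraticForm θ b) (hN : N ≠ 0) (x y : S) :
    (fun m : ℤ => b ((T (m * (N : ℤ)) : Zl) • x) y).HasFiniteSupport :=
  (h.hasFiniteSupport_T_smul_left x y).comp_of_injective
    (mul_left_injective₀ (Nat.cast_ne_zero.mpr hN))

theorem hasFiniteSupport_compactTail (h : IsLocalQuadraticForm θ b) (hN : N ≠ 0) (x y : S) :
    (fun m : ℕ => b x ((T (((m : ℤ) + 1) * (N : ℤ)) : Zl) • y)).HasFiniteSupport :=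
  (h.hasFiniteSupport_T_smul_right x y).comp_of_injective (g := fun m : ℕ => ((m : ℤ) + 1) * N)
    ((mul_left_injective₀ (Nat.cast_ne_zero.mpr hN)).comp
      ((add_left_injective 1).comp Nat.cast_injective))

theorem compactTail_add_left (h : IsLocalQuadraticForm θ b) (hN : N ≠ 0) (x x' y : S) :
    compactTail b N (x + x') y = compactTail b N x y + compactTail b N x' y := by
  simp only [compactTail, h.add_left]
  exact finsum_add_distrib (h.hasFiniteSupport_compactTail hN x y)
    (h.hasFiniteSupport_compactTail hN x' y)

theorem compactTail_add_right (h : IsLocalQuadraticForm θ b) (hN : N ≠ 0) (x y y' : S) :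
    compactTail b N x (y + y') = compactTail b N x y + compactTail b N x y' := by
  simp only [compactTail, smul_add, h.add_right]
  exact finsum_add_distrib (h.hasFiniteSupport_compactTail hN x y)
    (h.hasFiniteSupport_compactTail hN x y')

theorem compactForm_eq_add_compactTail (h : IsLocalQuadraticForm θ b) (hN : N ≠ 0) (x y : S) :
    compactForm b N x y = b x y + (compactTail b N y x + compactTail b N x y) := by
  rw [compactForm, finsum_int_eq_zero_add_finsum_nat (h.hasFiniteSupport_compactForm hN x y),
    compactTail, compactTail, ← finsum_add_distrib (h.hasFiniteSupport_compactTail hN y x)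
      (h.hasFiniteSupport_compactTail hN x y), zero_mul, T_zero, one_smul]
  congr 1
  refine finsum_congr fun m => ?_
  rw [h.comm _ y, h.T_smul_left, neg_mul, neg_neg]

theorem compactQuad_add (h : IsLocalQuadraticForm θ b) (hN : N ≠ 0) (x y : S) :
    compactQuad θ b N (x + y)
      = compactQuad θ b N x + compactQuad θ b N y + compactForm b N x y := by
  rw [compactQuad, compactQuad, compactQuad, h.compactTail_add_left hN, h.compactTail_add_right hN,
    h.compactTail_add_right hN, h.apply_add, h.compactForm_eq_add_compactTail hN]
  abel

theorem compactForm_comm (h : IsLocalQuadraticForm θ b) (hN : N ≠ 0) (x y : S) :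
    compactForm b N x y = compactForm b N y x := by
  rw [h.compactForm_eq_add_compactTail hN, h.compactForm_eq_add_compactTail hN, h.comm x y,
    add_comm (compactTail b N y x)]

theorem compactForm_self (h : IsLocalQuadraticForm θ b) (hN : N ≠ 0) (x : S) :
    compactForm b N x x = (2 : ℤ) • compactQuad θ b N x := by
  rw [h.compactForm_eq_add_compactTail hN, h.self, compactQuad, smul_add,
    two_zsmul (compactTail b N x x)]

theorem compactForm_add_left (h : IsLocalQuadraticForm θ b) (hN : N ≠ 0) (x x' y : S) :
    compactForm b N (x + x') y = compactForm b N x y + compactForm b N x' y := by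
  simp only [compactForm, smul_add, h.add_left]
  exact finsum_add_distrib (h.hasFiniteSupport_compactForm hN x y)
    (h.hasFiniteSupport_compactForm hN x' y)

theorem compactForm_add_right (h : IsLocalQuadraticForm θ b) (hN : N ≠ 0) (x y y' : S) :
    compactForm b N x (y + y') = compactForm b N x y + compactForm b N x y' := by
  rw [h.compactForm_comm hN, h.compactForm_add_left hN, h.compactForm_comm hN y,
    h.compactForm_comm hN y']

theorem compactForm_eq_zero_of_mem (h : IsLocalQuadraticForm θ b) (hN : N ≠ 0) {u : S}
    (hu : u ∈ IN S N) (y : S) : compactForm b N u y = 0 := by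
  obtain ⟨s, rfl⟩ := mem_IN.mp hu
  have hs := h.compactForm_add_left hN (s - (T N : Zl) • s) ((T N : Zl) • s) y
  rwa [sub_add_cancel, compactForm_T_smul_left, right_eq_add] at hs

theorem compactQuad_T_smul (h : IsLocalQuadraticForm θ b) (k : ℤ) (x : S) :
    compactQuad θ b N ((T k : Zl) • x) = compactQuad θ b N x := by
  simp only [compactQuad, compactTail, h.apply_T_smul, smul_comm (T _ : Zl) (T k : Zl),
    h.T_smul_T_smul]

theorem compactQuad_eq_zero_of_mem (h : IsLocalQuadraticForm θ b) (hN : N ≠ 0) {u : S}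
    (hu : u ∈ IN S N) : compactQuad θ b N u = 0 := by
  obtain ⟨s, rfl⟩ := mem_IN.mp hu
  have hs := h.compactQuad_add hN (s - (T N : Zl) • s) ((T N : Zl) • s)
  rwa [sub_add_cancel, h.compactQuad_T_smul, h.compactForm_eq_zero_of_mem hN hu, add_zero,
    right_eq_add] at hs

theorem compactQuad_add_of_mem (h : IsLocalQuadraticForm θ b) (hN : N ≠ 0) (x : S) {u : S}
    (hu : u ∈ IN S N) : compactQuad θ b N (x + u) = compactQuad θ b N x := by
  rw [h.compactQuad_add hN, h.compactQuad_eq_zero_of_mem hN hu, h.compactForm_comm hN,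
    h.compactForm_eq_zero_of_mem hN hu, add_zero, add_zero]

noncomputable def compactQuadQuot (h : IsLocalQuadraticForm θ b) (hN : N ≠ 0) :
    S ⧸ IN S N → QZ :=
  Quotient.lift (compactQuad θ b N) fun x y hxy => by
    rw [← sub_add_cancel x y, add_comm,
      h.compactQuad_add_of_mem hN _ ((Submodule.quotientRel_def _).mp hxy)]

theorem compactQuadQuot_mk (h : IsLocalQuadraticForm θ b) (hN : N ≠ 0) (x : S) :
    h.compactQuadQuot hN (Submodule.Quotient.mk x) = compactQuad θ b N x :=
  rfl

theorem compactQuadQuot_polar_mk (h : IsLocalQuadraticForm θ b) (hN : N ≠ 0) (x y : S) :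
    h.compactQuadQuot hN (Submodule.Quotient.mk x + Submodule.Quotient.mk y)
        - h.compactQuadQuot hN (Submodule.Quotient.mk x)
        - h.compactQuadQuot hN (Submodule.Quotient.mk y) = compactForm b N x y := by
  rw [← Submodule.Quotient.mk_add, compactQuadQuot_mk, compactQuadQuot_mk, compactQuadQuot_mk,
    h.compactQuad_add hN]
  abel

theorem compactQuadQuot_T_smul (h : IsLocalQuadraticForm θ b) (hN : N ≠ 0) (z : S ⧸ IN S N) :
    h.compactQuadQuot hN ((T 1 : Zl) • z) = h.compactQuadQuot hN z := by
  obtain ⟨x, rfl⟩ := Submodule.Quotient.mk_surjective _ z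
  exact h.compactQuad_T_smul 1 x

theorem compactQuadQuot_polar_add_right (h : IsLocalQuadraticForm θ b) (hN : N ≠ 0)
    (z w w' : S ⧸ IN S N) :
    h.compactQuadQuot hN (z + (w + w')) - h.compactQuadQuot hN z
        - h.compactQuadQuot hN (w + w')
      = (h.compactQuadQuot hN (z + w) - h.compactQuadQuot hN z - h.compactQuadQuot hN w)
        + (h.compactQuadQuot hN (z + w') - h.compactQuadQuot hN z - h.compactQuadQuot hN w') := by
  obtain ⟨x, rfl⟩ := Submodule.Quotient.mk_surjective _ z
  obtain ⟨y, rfl⟩ := Submodule.Quotient.mk_surjective _ w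
  obtain ⟨y', rfl⟩ := Submodule.Quotient.mk_surjective _ w'
  rw [← Submodule.Quotient.mk_add _ (x := y), h.compactQuadQuot_polar_mk,
    h.compactQuadQuot_polar_mk, h.compactQuadQuot_polar_mk, h.compactForm_add_right hN]

theorem compactQuadQuot_polar_add_left (h : IsLocalQuadraticForm θ b) (hN : N ≠ 0)
    (z w w' : S ⧸ IN S N) :
    h.compactQuadQuot hN ((z + w) + w') - h.compactQuadQuot hN (z + w)
        - h.compactQuadQuot hN w'
      = (h.compactQuadQuot hN (z + w') - h.compactQuadQuot hN z - h.compactQuadQuot hN w')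
        + (h.compactQuadQuot hN (w + w') - h.compactQuadQuot hN w
          - h.compactQuadQuot hN w') := by
  obtain ⟨x, rfl⟩ := Submodule.Quotient.mk_surjective _ z
  obtain ⟨y, rfl⟩ := Submodule.Quotient.mk_surjective _ w
  obtain ⟨y', rfl⟩ := Submodule.Quotient.mk_surjective _ w'
  rw [← Submodule.Quotient.mk_add _ (x := x), h.compactQuadQuot_polar_mk,
    h.compactQuadQuot_polar_mk, h.compactQuadQuot_polar_mk, h.compactForm_add_left hN]

theorem compactQuadQuot_polar_self (h : IsLocalQuadraticForm θ b) (hN : N ≠ 0)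
    (z : S ⧸ IN S N) :
    h.compactQuadQuot hN (z + z) - h.compactQuadQuot hN z - h.compactQuadQuot hN z
      = (2 : ℤ) • h.compactQuadQuot hN z := by
  obtain ⟨x, rfl⟩ := Submodule.Quotient.mk_surjective _ z
  rw [h.compactQuadQuot_polar_mk, h.compactForm_self hN, compactQuadQuot_mk]

end IsLocalQuadraticForm

end

theorem stmt6_general (S : Type*) [AddCommGroup S] [Module Zl S]
    (θ : S → QZ) (b : S → S → QZ) (hbdef : ∀ x y : S, b x y = θ (x + y) - θ x - θ y)
    (hbl : ∀ x x' y : S, b (x + x') y = b x y + b x' y)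
    (hquad : ∀ x : S, b x x = (2 : ℤ) • θ x)
    (hTI : ∀ x : S, θ ((T 1 : Zl) • x) = θ x)
    (hloc : ∀ x y : S, ∃ ℓ : ℕ, ∀ k : ℤ, (ℓ : ℤ) ≤ |k| → b ((T k : Zl) • x) y = 0)
    (N : ℕ) (hN : 0 < N) :
    ∃ θN : (S ⧸ IN S N) → QZ,
      -- `θ_N` is well defined by the stated formula on classes `ρ x`:
      (∀ x : S, θN (Submodule.Quotient.mk x)
          = θ x + ∑ᶠ m : ℕ, b x ((T (((m : ℤ) + 1) * (N : ℤ)) : Zl) • x)) ∧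
      -- and is the unique such function:
      (∀ θN' : (S ⧸ IN S N) → QZ,
        (∀ x : S, θN' (Submodule.Quotient.mk x)
          = θ x + ∑ᶠ m : ℕ, b x ((T (((m : ℤ) + 1) * (N : ℤ)) : Zl) • x)) → θN' = θN) ∧
      -- `θ_N` is translation-invariant:
      (∀ z : S ⧸ IN S N, θN ((T 1 : Zl) • z) = θN z) ∧
      -- `θ_N` is a quadratic form: its associated form is `ℤ`-bilinear ...
      (∀ z w w' : S ⧸ IN S N,
        θN (z + (w + w')) - θN z - θN (w + w')
          = (θN (z + w) - θN z - θN w) + (θN (z + w') - θN z - θN w')) ∧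
      (∀ z w w' : S ⧸ IN S N,
        θN ((z + w) + w') - θN (z + w) - θN w'
          = (θN (z + w') - θN z - θN w') + (θN (w + w') - θN w - θN w')) ∧
      -- ... and satisfies `b_N (z, z) = 2 θ_N z`:
      (∀ z : S ⧸ IN S N, θN (z + z) - θN z - θN z = (2 : ℤ) • θN z) ∧
      -- the associated bilinear form of `θ_N` is the compactified form `b_N`:
      (∀ x y : S,
        θN (Submodule.Quotient.mk x + Submodule.Quotient.mk y)
            - θN (Submodule.Quotient.mk x) - θN (Submodule.Quotient.mk y)
          = ∑ᶠ m : ℤ, b ((T (m * (N : ℤ)) : Zl) • x) y) := by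
  have h : IsLocalQuadraticForm θ b := ⟨hbdef, hbl, hquad, hTI, hloc⟩
  refine ⟨h.compactQuadQuot hN.ne', fun x => rfl, fun θN' hθN' => funext fun z => ?_,
    h.compactQuadQuot_T_smul hN.ne', h.compactQuadQuot_polar_add_right hN.ne',
    h.compactQuadQuot_polar_add_left hN.ne', h.compactQuadQuot_polar_self hN.ne',
    h.compactQuadQuot_polar_mk hN.ne'⟩
  obtain ⟨x, rfl⟩ := Submodule.Quotient.mk_surjective _ z
  exact hθN' x

/-- Let `(S, θ)` be a finite-order theory of excitations (`S` a finitely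
generated `ℤ[t^±]`-module of finite exponent, `θ` a translation-invariant local quadratic
form with associated bilinear form `b`).  Then the formula
`θ_N (ρ x) = θ x + Σ_{m > 0} b (x, t^{mN} x)` gives a well-defined function on
`S_N = S / (1 - t^N) S` (independent of the representative `x`), which is a
translation-invariant quadratic form whose associated bilinear form is
`b_N (ρ x, ρ y) = Σ_{m ∈ ℤ} b (t^{mN} x, y)`. -/
theorem stmt6 (S : Type*) [AddCommGroup S] [Module Zl S] [Module.Finite Zl S]
    (n : ℕ) (hn : 0 < n) (hexp : ∀ x : S, n • x = 0)
    (θ : S → QZ) (b : S → S → QZ) (hbdef : ∀ x y : S, b x y = θ (x + y) - θ x - θ y)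
    (hbl : ∀ x x' y : S, b (x + x') y = b x y + b x' y)
    (hquad : ∀ x : S, b x x = (2 : ℤ) • θ x)
    (hTI : ∀ x : S, θ ((T 1 : Zl) • x) = θ x)
    (hloc : ∀ x y : S, ∃ ℓ : ℕ, ∀ k : ℤ, (ℓ : ℤ) ≤ |k| → b ((T k : Zl) • x) y = 0)
    (N : ℕ) (hN : 0 < N) :
    ∃ θN : (S ⧸ IN S N) → QZ,
      -- `θ_N` is well defined by the stated formula on classes `ρ x`:
      (∀ x : S, θN (Submodule.Quotient.mk x)
          = θ x + ∑ᶠ m : ℕ, b x ((T (((m : ℤ) + 1) * (N : ℤ)) : Zl) • x)) ∧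
      -- and is the unique such function:
      (∀ θN' : (S ⧸ IN S N) → QZ,
        (∀ x : S, θN' (Submodule.Quotient.mk x)
          = θ x + ∑ᶠ m : ℕ, b x ((T (((m : ℤ) + 1) * (N : ℤ)) : Zl) • x)) → θN' = θN) ∧
      -- `θ_N` is translation-invariant:
      (∀ z : S ⧸ IN S N, θN ((T 1 : Zl) • z) = θN z) ∧
      -- `θ_N` is a quadratic form: its associated form is `ℤ`-bilinear ...
      (∀ z w w' : S ⧸ IN S N,
        θN (z + (w + w')) - θN z - θN (w + w')
          = (θN (z + w) - θN z - θN w) + (θN (z + w') - θN z - θN w')) ∧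
      (∀ z w w' : S ⧸ IN S N,
        θN ((z + w) + w') - θN (z + w) - θN w'
          = (θN (z + w') - θN z - θN w') + (θN (w + w') - θN w - θN w')) ∧
      -- ... and satisfies `b_N (z, z) = 2 θ_N z`:
      (∀ z : S ⧸ IN S N, θN (z + z) - θN z - θN z = (2 : ℤ) • θN z) ∧
      -- the associated bilinear form of `θ_N` is the compactified form `b_N`:
      (∀ x y : S,
        θN (Submodule.Quotient.mk x + Submodule.Quotient.mk y)
            - θN (Submodule.Quotient.mk x) - θN (Submodule.Quotient.mk y)
          = ∑ᶠ m : ℤ, b ((T (m * (N : ℤ)) : Zl) • x) y) :=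
  stmt6_general S θ b hbdef hbl hquad hTI hloc N hN

end Stmt6
end

section
/- Let p be a prime and k ∈ ℕ. The set of zero divisors in the Laurent polynomial ring ℤ_{p^k}[t,t⁻¹] is exactly the ideal (p). -/
/-!
A zero divisor `f` of `R[T;T⁻¹]` is killed by a nonzero constant `a` (McCoy's theorem, transported
from `R[X]` by clearing denominators with a power of `T`). In `ZMod (p ^ k)` every element prime to
`p` is a unit, so `a * f.coeff n = 0` with `a ≠ 0` forces `p ∣ f.coeff n` for every `n`, i.e.
`C p ∣ f`. Conversely every multiple of `p` is killed by the nonzero constant `p ^ (k - 1)`.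
-/

open LaurentPolynomial

namespace LaurentPolynomial

variable {R : Type*}

theorem coeff_C_mul [Semiring R] (r : R) (f : R[T;T⁻¹]) (n : ℤ) :
    (C r * f).coeff n = r * f.coeff n :=
  AddMonoidAlgebra.coeff_single_zero_mul f r n

theorem C_dvd_iff_dvd_coeff [CommSemiring R] (r : R) (f : R[T;T⁻¹]) :
    C r ∣ f ↔ ∀ n, r ∣ f.coeff n := by
  constructor
  · rintro ⟨g, rfl⟩ n
    exact ⟨g.coeff n, coeff_C_mul r g n⟩
  · intro h
    rw [← AddMonoidAlgebra.sum_coeff_single f, Finsupp.sum]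
    refine Finset.dvd_sum fun n _ => ?_
    rw [single_eq_C_mul_T]
    exact (map_dvd C (h n)).mul_right _

theorem exists_C_mul_eq_zero_of_mul_eq_zero [CommRing R] {f g : R[T;T⁻¹]} (hg : g ≠ 0)
    (hfg : f * g = 0) : ∃ a : R, a ≠ 0 ∧ C a * f = 0 := by
  obtain ⟨n, f', hf'⟩ := f.exists_T_pow
  obtain ⟨m, g', hg'⟩ := g.exists_T_pow
  have hg'ne : g' ≠ 0 := by
    rw [← Polynomial.toLaurent_ne_zero, hg']
    exact fun h => hg ((isUnit_T _).mul_left_eq_zero.mp h)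
  have hf'g' : f' * g' = 0 := by
    rw [← Polynomial.toLaurent_eq_zero, map_mul, hf', hg', mul_mul_mul_comm, hfg, zero_mul]
  obtain ⟨a, ha, haf'⟩ := Polynomial.notMem_nonZeroDivisors_iff.mp
    fun hf' => hg'ne (hf'.1 g' hf'g')
  refine ⟨a, ha, (isUnit_T (n : ℤ)).mul_left_eq_zero.mp ?_⟩
  rw [mul_assoc, ← hf', ← Polynomial.toLaurent_C, ← map_mul, ← Polynomial.smul_eq_C_mul, haf',
    map_zero]

end LaurentPolynomial

namespace ZMod

variable {p k : ℕ}

theorem natCast_dvd_of_mul_eq_zero (hp : p.Prime) {a c : ZMod (p ^ k)} (ha : a ≠ 0)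
    (hac : a * c = 0) : (p : ZMod (p ^ k)) ∣ c := by
  have : NeZero (p ^ k) := ⟨pow_ne_zero k hp.ne_zero⟩
  rw [← natCast_zmod_val c]
  refine Nat.cast_dvd_cast (not_not.mp fun hpc => ha ?_)
  have hc : IsUnit (c.val : ZMod (p ^ k)) := (isUnit_iff_coprime _ _).mpr <|
    (Nat.coprime_comm.mp (hp.coprime_iff_not_dvd.mpr hpc)).pow_right k
  rw [natCast_zmod_val] at hc
  exact hc.mul_left_eq_zero.mp hac

theorem natCast_pow_pred_ne_zero (hp : 1 < p) (hk : 0 < k) :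
    (p : ZMod (p ^ k)) ^ (k - 1) ≠ 0 := by
  rw [← Nat.cast_pow, Ne, natCast_eq_zero_iff, Nat.pow_dvd_pow_iff_le_right hp]
  omega

end ZMod

/-- Let `p` be a prime and `k ≥ 1`.  The set of zero divisors in the
Laurent polynomial ring `ℤ_{p^k}[t, t⁻¹]` is exactly the ideal `(p)`. -/
theorem stmt10 (p : ℕ) (hp : p.Prime) (k : ℕ) (hk : 0 < k)
    (f : LaurentPolynomial (ZMod (p ^ k))) :
    (∃ g : LaurentPolynomial (ZMod (p ^ k)), g ≠ 0 ∧ f * g = 0) ↔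
      f ∈ Ideal.span {(p : LaurentPolynomial (ZMod (p ^ k)))} := by
  rw [Ideal.mem_span_singleton, ← map_natCast C]
  constructor
  · rintro ⟨g, hg, hfg⟩
    obtain ⟨a, ha, haf⟩ := exists_C_mul_eq_zero_of_mul_eq_zero hg hfg
    refine (C_dvd_iff_dvd_coeff _ f).mpr fun n => ZMod.natCast_dvd_of_mul_eq_zero hp ha ?_
    rw [← coeff_C_mul, haf]
    rfl
  · rintro ⟨h, rfl⟩
    refine ⟨C ((p : ZMod (p ^ k)) ^ (k - 1)), ?_, ?_⟩
    · exact AddMonoidAlgebra.single_ne_zero.mpr (ZMod.natCast_pow_pred_ne_zero hp.one_lt hk)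
    · have hpk : (p : ZMod (p ^ k)) * (p : ZMod (p ^ k)) ^ (k - 1) = 0 := by
        rw [← pow_succ', Nat.sub_add_cancel hk, ← Nat.cast_pow, ZMod.natCast_self]
      rw [mul_right_comm, ← map_mul, hpk, map_zero, zero_mul]
end

section
/- Let M and N be finitely generated torsion-free modules over R = ℤ_{p^k}[t^±] with p-torsion filtrations M^s and N^s, and let f : M → N be R-linear. Then f induces well-defined R-linear maps f_s : M^s/M^{s−1} → N^s/N^{s−1}, and: (1) f is injective iff all f_s are injective; (2) if all f_s are surjective then f is surjective; (3) f is an isomorphism iff all f_s are isomorphisms. -/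
namespace Stmt12

/-- `R = ℤ_{p^k}[t^±]`. -/
abbrev Rk (p k : ℕ) := LaurentPolynomial (ZMod (p ^ k))

/-- The `s`-th step `M^s = {x ∈ M : p^s x = 0}` of the `p`-torsion filtration. -/
noncomputable def Ms (p k : ℕ) (M : Type*) [AddCommGroup M] [Module (Rk p k) M] (s : ℕ) :
    Submodule (Rk p k) M :=
  LinearMap.ker (((p : Rk p k) ^ s) • (LinearMap.id : M →ₗ[Rk p k] M))

/-- The subquotient `M_s = M^s / M^{s-1}`. -/
abbrev Qs (p k : ℕ) (M : Type*) [AddCommGroup M] [Module (Rk p k) M] (s : ℕ) :=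
  Ms p k M s ⧸ (Submodule.comap (Ms p k M s).subtype (Ms p k M (s - 1)))

/-!
Since `p ^ k = 0` in `R`, the filtration `0 = M^0 ≤ M^1 ≤ ⋯ ≤ M^k = M` is finite, and an
induction up the filtrations shows that a map of finitely filtered modules is injective
(surjective) as soon as all its graded pieces are. Conversely, an injective `f` satisfies
`f⁻¹(N^s) = M^s`, which makes each `f_s` injective, and a bijective `f` then maps `M^s` onto
`N^s`, which makes each `f_s` surjective.
-/

section Subquotient

variable {R M N : Type*} [Ring R] [AddCommGroup M] [Module R M] [AddCommGroup N] [Module R N]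
  (f : M →ₗ[R] N) {A B : Submodule R M} {C D : Submodule R N}

def subquotientMap (hB : B ≤ D.comap f) (hA : A ≤ C.comap f) :
    B ⧸ A.comap B.subtype →ₗ[R] D ⧸ C.comap D.subtype :=
  Submodule.mapQ _ _ (f.restrict fun _ hx => hB hx) fun _ hx => hA hx

variable {f}

@[simp]
theorem subquotientMap_mk (hB : B ≤ D.comap f) (hA : A ≤ C.comap f) (x : B) :
    subquotientMap f hB hA (Submodule.Quotient.mk x) = Submodule.Quotient.mk ⟨f x, hB x.2⟩ :=
  rfl

theorem injective_subquotientMap_iff (hB : B ≤ D.comap f) (hA : A ≤ C.comap f) :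
    Function.Injective (subquotientMap f hB hA) ↔ B ⊓ C.comap f ≤ A := by
  rw [injective_iff_map_eq_zero, Submodule.Quotient.mk_surjective _ |>.forall]
  simp only [subquotientMap_mk, Submodule.Quotient.mk_eq_zero, Submodule.mem_comap,
    Submodule.subtype_apply]
  constructor
  · rintro h x ⟨hxB, hxC⟩
    exact h ⟨x, hxB⟩ hxC
  · exact fun h x hx => h ⟨x.2, hx⟩

theorem surjective_subquotientMap_iff (hB : B ≤ D.comap f) (hA : A ≤ C.comap f) :
    Function.Surjective (subquotientMap f hB hA) ↔ D ≤ B.map f ⊔ C := by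
  rw [Function.Surjective, Submodule.Quotient.mk_surjective _ |>.forall]
  simp only [(Submodule.Quotient.mk_surjective _).exists, subquotientMap_mk, Submodule.Quotient.eq,
    Submodule.mem_comap, Submodule.subtype_apply, Submodule.coe_sub]
  constructor
  · intro h y hy
    obtain ⟨x, hx⟩ := h ⟨y, hy⟩
    rw [Submodule.mem_sup]
    exact ⟨f x, Submodule.mem_map_of_mem x.2, y - f x, by simpa using C.neg_mem hx, by abel⟩
  · intro h y
    obtain ⟨_, ⟨x, hxB, rfl⟩, z, hz, hxz⟩ := Submodule.mem_sup.1 (h y.2)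
    exact ⟨⟨x, hxB⟩, by simpa [← hxz] using hz⟩

theorem ker_eq_bot_of_forall_inf_comap_le {F : ℕ → Submodule R M} {G : ℕ → Submodule R N}
    {k : ℕ} (hF₀ : F 0 = ⊥) (hFk : F k = ⊤) (h : ∀ s < k, F (s + 1) ⊓ (G s).comap f ≤ F s) :
    LinearMap.ker f = ⊥ := by
  have hker : ∀ s ≤ k, LinearMap.ker f ⊓ F s = ⊥ := by
    intro s hs
    induction s with
    | zero => rw [hF₀, inf_bot_eq]
    | succ s ih =>
      have hcomap : LinearMap.ker f ≤ (G s).comap f := LinearMap.ker_le_comap f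
      have hstep : LinearMap.ker f ⊓ F (s + 1) ≤ F s :=
        (le_inf inf_le_right (inf_le_left.trans hcomap)).trans (h s (by omega))
      exact eq_bot_iff.2 <| (le_inf inf_le_left hstep).trans (ih (by omega)).le
  simpa [hFk] using hker k le_rfl

theorem range_eq_top_of_forall_le_map_sup {F : ℕ → Submodule R M} {G : ℕ → Submodule R N}
    {k : ℕ} (hG₀ : G 0 = ⊥) (hGk : G k = ⊤) (h : ∀ s < k, G (s + 1) ≤ (F (s + 1)).map f ⊔ G s) :
    LinearMap.range f = ⊤ := by
  have hrange : ∀ s ≤ k, G s ≤ LinearMap.range f := by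
    intro s hs
    induction s with
    | zero => simp [hG₀]
    | succ s ih => exact (h s (by omega)).trans (sup_le LinearMap.map_le_range (ih (by omega)))
  exact eq_top_iff.2 (hGk ▸ hrange k le_rfl)

end Subquotient

section TorsionFiltration

variable {p k : ℕ} {M N : Type*} [AddCommGroup M] [Module (Rk p k) M] [AddCommGroup N]
  [Module (Rk p k) N]

theorem mem_Ms {s : ℕ} {x : M} : x ∈ Ms p k M s ↔ (p : Rk p k) ^ s • x = 0 := by
  simp [Ms]

theorem natCast_pow_self_eq_zero : (p : Rk p k) ^ k = 0 := by
  rw [← Nat.cast_pow, ← map_natCast (algebraMap (ZMod (p ^ k)) (Rk p k)), ZMod.natCast_self,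
    map_zero]

theorem Ms_zero : Ms p k M 0 = ⊥ :=
  eq_bot_iff.2 fun x hx => by simpa [mem_Ms] using hx

theorem Ms_self : Ms p k M k = ⊤ :=
  eq_top_iff.2 fun x _ => by simp [mem_Ms, natCast_pow_self_eq_zero]

theorem Ms_le_comap (f : M →ₗ[Rk p k] N) (s : ℕ) : Ms p k M s ≤ (Ms p k N s).comap f :=
  fun x hx => by simp [mem_Ms, ← map_smul, mem_Ms.1 hx]

theorem comap_Ms_of_injective {f : M →ₗ[Rk p k] N} (hf : Function.Injective f) (s : ℕ) :
    (Ms p k N s).comap f = Ms p k M s :=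
  le_antisymm (fun x hx => mem_Ms.2 <| hf <| by simpa [mem_Ms] using hx) (Ms_le_comap f s)

end TorsionFiltration

theorem stmt12_general (p k : ℕ)
    (M N : Type*) [AddCommGroup M] [Module (Rk p k) M]
    [AddCommGroup N] [Module (Rk p k) N]
    (f : M →ₗ[Rk p k] N) :
    ∃ fs : ∀ s : ℕ, Qs p k M s →ₗ[Rk p k] Qs p k N s,
      -- the maps `f_s` are induced by `f`:
      (∀ (s : ℕ) (x : Ms p k M s) (y : Ms p k N s), (y : N) = f (x : M) →
        fs s (Submodule.Quotient.mk x) = Submodule.Quotient.mk y) ∧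
      -- (1)
      (Function.Injective f ↔ ∀ s : ℕ, 1 ≤ s → s ≤ k → Function.Injective (fs s)) ∧
      -- (2)
      ((∀ s : ℕ, 1 ≤ s → s ≤ k → Function.Surjective (fs s)) → Function.Surjective f) ∧
      -- (3)
      (Function.Bijective f ↔ ∀ s : ℕ, 1 ≤ s → s ≤ k → Function.Bijective (fs s)) := by
  set fs := fun s => subquotientMap f (Ms_le_comap f s) (Ms_le_comap f (s - 1))
  have injective_fs (hf : Function.Injective f) (s : ℕ) : Function.Injective (fs s) :=
    (injective_subquotientMap_iff _ _).2 (by rw [comap_Ms_of_injective hf]; exact inf_le_right)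
  have surjective_fs (hf : Function.Bijective f) (s : ℕ) : Function.Surjective (fs s) :=
    (surjective_subquotientMap_iff _ _).2 <| by
      rw [← comap_Ms_of_injective hf.1, Submodule.map_comap_eq_of_surjective hf.2]
      exact le_sup_left
  have injective_f (h : ∀ s, 1 ≤ s → s ≤ k → Function.Injective (fs s)) :
      Function.Injective f :=
    LinearMap.ker_eq_bot.1 <| ker_eq_bot_of_forall_inf_comap_le (F := Ms p k M) Ms_zero Ms_self
      fun s hs => by simpa using (injective_subquotientMap_iff _ _).1 (h (s + 1) (by omega) hs)
  have surjective_f (h : ∀ s, 1 ≤ s → s ≤ k → Function.Surjective (fs s)) :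
      Function.Surjective f :=
    LinearMap.range_eq_top.1 <| range_eq_top_of_forall_le_map_sup (G := Ms p k N) Ms_zero Ms_self
      fun s hs => by simpa using (surjective_subquotientMap_iff _ _).1 (h (s + 1) (by omega) hs)
  refine ⟨fs, fun s x y hy => congrArg _ (Subtype.ext hy.symm),
    ⟨fun hf s _ _ => injective_fs hf s, injective_f⟩, surjective_f, ⟨?_, ?_⟩⟩
  · exact fun hf s _ _ => ⟨injective_fs hf.1 s, surjective_fs hf s⟩
  · exact fun h => ⟨injective_f fun s h₁ h₂ => (h s h₁ h₂).1,
      surjective_f fun s h₁ h₂ => (h s h₁ h₂).2⟩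

/-- Let `M` and `N` be finitely generated torsion-free modules over
`R = ℤ_{p^k}[t^±]` with `p`-torsion filtrations `M^s`, `N^s`, and let `f : M → N` be
`R`-linear.  Then `f` induces well-defined `R`-linear maps
`f_s : M^s/M^{s-1} → N^s/N^{s-1}` (with `f_s [x] = [f x]`), and: (1) `f` is injective iff all
`f_s` (for `1 ≤ s ≤ k`) are injective; (2) if all `f_s` are surjective then `f` is
surjective; (3) `f` is an isomorphism iff all `f_s` are isomorphisms. -/
theorem stmt12 (p k : ℕ) (hp : p.Prime) (hk : 0 < k)
    (M N : Type*) [AddCommGroup M] [Module (Rk p k) M] [Module.Finite (Rk p k) M]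
    [AddCommGroup N] [Module (Rk p k) N] [Module.Finite (Rk p k) N]
    (htfM : ∀ x : M, ∀ r ∈ nonZeroDivisors (Rk p k), r • x = 0 → x = 0)
    (htfN : ∀ x : N, ∀ r ∈ nonZeroDivisors (Rk p k), r • x = 0 → x = 0)
    (f : M →ₗ[Rk p k] N) :
    ∃ fs : ∀ s : ℕ, Qs p k M s →ₗ[Rk p k] Qs p k N s,
      -- the maps `f_s` are induced by `f`:
      (∀ (s : ℕ) (x : Ms p k M s) (y : Ms p k N s), (y : N) = f (x : M) →
        fs s (Submodule.Quotient.mk x) = Submodule.Quotient.mk y) ∧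
      -- (1)
      (Function.Injective f ↔ ∀ s : ℕ, 1 ≤ s → s ≤ k → Function.Injective (fs s)) ∧
      -- (2)
      ((∀ s : ℕ, 1 ≤ s → s ≤ k → Function.Surjective (fs s)) → Function.Surjective f) ∧
      -- (3)
      (Function.Bijective f ↔ ∀ s : ℕ, 1 ≤ s → s ≤ k → Function.Bijective (fs s)) :=
  stmt12_general p k M N f

end Stmt12
end

section
/- Let ℛ be a finite nonzero commutative ring and f ∈ ℛ[t^±] a nonzero Laurent polynomial of positive relative degree whose highest and lowest degree coefficients are units in ℛ. Then there exists N₀ ∈ ℕ such that for every N divisible by N₀ there is ξ_N ∈ ℛ[t^±] with ξ_N · f = 1 − t^N; moreover the highest and lowest degree coefficients of ξ_N are units, and the relative degree of ξ_N is strictly less than N. -/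
/-!
Shifting by a power of `T` turns `f` into a polynomial `p` whose leading and constant
coefficients are units. Since `p` is monic up to a unit, `ℛ[X]/(p)` is a finite ring, and the
class of `X` is a unit in it because `p(0)` is; its order `N₀` is finite, so `p ∣ X ^ N - 1`
whenever `N₀ ∣ N`. The cofactor again has unit leading and constant coefficients and degree
`N - deg p < N`; shifting it back and negating gives `ξ_N`.
-/

open LaurentPolynomial Polynomial

namespace AdjoinRoot

variable {R : Type*} [CommRing R]

theorem isUnit_root_of_isUnit_coeff_zero {p : R[X]} (h0 : IsUnit (p.coeff 0)) :
    IsUnit (root p) := by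
  have hsplit : mk p p.divX * root p = -of p (p.coeff 0) := by
    rw [eq_neg_iff_add_eq_zero, ← mk_X, ← mk_C, ← map_mul, ← map_add, divX_mul_X_add, mk_self]
  exact isUnit_of_mul_isUnit_right (hsplit ▸ (h0.map (of p)).neg)

end AdjoinRoot

namespace Polynomial

variable {R : Type*} [CommRing R]

theorem Monic.exists_dvd_X_pow_sub_one [Finite R] {p : R[X]} (hp : p.Monic)
    (h0 : IsUnit (p.coeff 0)) : ∃ N₀ > 0, ∀ N, N₀ ∣ N → p ∣ X ^ N - 1 := by
  have := hp.finite_adjoinRoot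
  have := Module.finite_of_finite R (M := AdjoinRoot p)
  set x := (AdjoinRoot.isUnit_root_of_isUnit_coeff_zero h0).unit
  refine ⟨orderOf x, orderOf_pos x, fun N hN => ?_⟩
  rw [← AdjoinRoot.mk_eq_zero, map_sub, map_pow, AdjoinRoot.mk_X, map_one, sub_eq_zero]
  exact congrArg Units.val (orderOf_dvd_iff_pow_eq_one.mp hN)

theorem exists_dvd_X_pow_sub_one [Finite R] {p : R[X]} (hlead : IsUnit p.leadingCoeff)
    (h0 : IsUnit (p.coeff 0)) : ∃ N₀ > 0, ∀ N, N₀ ∣ N → p ∣ X ^ N - 1 := by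
  have hnormal : hlead.unit⁻¹ • p = C (↑hlead.unit⁻¹ : R) * p := by
    rw [Units.smul_def, smul_eq_C_mul]
  have h0' : IsUnit ((hlead.unit⁻¹ • p).coeff 0) := by
    rw [hnormal, coeff_C_mul]
    exact hlead.unit⁻¹.isUnit.mul h0
  obtain ⟨N₀, hN₀, hdvd⟩ := (monic_of_isUnit_leadingCoeff_inv_smul hlead).exists_dvd_X_pow_sub_one h0'
  exact ⟨N₀, hN₀, fun N hN => (hnormal ▸ dvd_mul_left p _).trans (hdvd N hN)⟩

section Cofactor

variable {p q : R[X]} {N : ℕ}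

theorem leadingCoeff_mul_leadingCoeff_of_X_pow_sub_one_eq_mul [Nontrivial R] (hN : 0 < N)
    (hp : IsUnit p.leadingCoeff) (h : X ^ N - 1 = p * q) :
    p.leadingCoeff * q.leadingCoeff = 1 := by
  have hq : q ≠ 0 := by
    rintro rfl
    have hlc := leadingCoeff_X_pow_sub_one (R := R) hN
    rw [h, mul_zero, leadingCoeff_zero] at hlc
    exact zero_ne_one hlc
  rw [← leadingCoeff_mul' (by rwa [Ne, hp.mul_right_eq_zero, leadingCoeff_eq_zero]), ← h,
    leadingCoeff_X_pow_sub_one hN]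

theorem natDegree_add_natDegree_of_X_pow_sub_one_eq_mul [Nontrivial R] (hN : 0 < N)
    (hp : IsUnit p.leadingCoeff) (h : X ^ N - 1 = p * q) :
    p.natDegree + q.natDegree = N := by
  have hlc := leadingCoeff_mul_leadingCoeff_of_X_pow_sub_one_eq_mul hN hp h
  rw [← natDegree_mul' (by rw [hlc]; exact one_ne_zero), ← h, ← C_1, natDegree_X_pow_sub_C]

theorem isUnit_coeff_zero_of_X_pow_sub_one_eq_mul (hN : 0 < N) (h : X ^ N - 1 = p * q) :
    IsUnit (q.coeff 0) := by
  have h0 : p.coeff 0 * q.coeff 0 = -1 := by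
    rw [← mul_coeff_zero, ← h, coeff_sub, coeff_X_pow, coeff_one, if_neg hN.ne, if_pos rfl,
      zero_sub]
  exact isUnit_of_mul_isUnit_right (h0 ▸ isUnit_one.neg)

end Cofactor

end Polynomial

namespace LaurentPolynomial

variable {R : Type*} [Semiring R]

theorem coeff_T_mul (n m : ℤ) (f : R[T;T⁻¹]) : (T n * f).coeff m = f.coeff (m - n) := by
  rw [T, AddMonoidAlgebra.coeff_single_mul_apply, one_mul, neg_add_eq_sub]

theorem _root_.Polynomial.coeff_toLaurent_natCast (p : R[X]) (n : ℕ) :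
    (toLaurent p).coeff n = p.coeff n :=
  Finsupp.mapDomain_apply Nat.castEmbedding.injective _ _

theorem _root_.Polynomial.coeff_toLaurent_of_neg (p : R[X]) {m : ℤ} (hm : m < 0) :
    (toLaurent p).coeff m = 0 := by
  refine Finsupp.mapDomain_of_notMem_range _ _ ?_
  rintro ⟨n, rfl⟩
  exact (Int.natCast_nonneg n).not_gt hm

theorem toLaurent_trunc_of_coeff_neg {f : R[T;T⁻¹]} (hf : ∀ m < 0, f.coeff m = 0) :
    toLaurent (trunc f) = f := by
  ext m
  rcases lt_or_ge m 0 with hm | hm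
  · rw [coeff_toLaurent_of_neg _ hm, hf m hm]
  · lift m to ℕ using hm
    exact coeff_toLaurent_natCast _ _

theorem coeff_T_mul_toLaurent_ne_zero {n m : ℤ} {p : R[X]}
    (h : (T n * toLaurent p).coeff m ≠ 0) : n ≤ m ∧ m ≤ n + p.natDegree := by
  rw [coeff_T_mul] at h
  obtain ⟨k, hk⟩ : ∃ k : ℕ, m - n = k :=
    ⟨(m - n).toNat, by by_contra hneg; exact h (coeff_toLaurent_of_neg p (by omega))⟩
  rw [hk, coeff_toLaurent_natCast] at h
  have := le_natDegree_of_ne_zero h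
  omega

theorem coeff_T_mul_toLaurent_add_natDegree (n : ℤ) (p : R[X]) :
    (T n * toLaurent p).coeff (n + p.natDegree) = p.leadingCoeff := by
  rw [coeff_T_mul, add_sub_cancel_left, coeff_toLaurent_natCast, leadingCoeff]

theorem coeff_T_mul_toLaurent_self (n : ℤ) (p : R[X]) :
    (T n * toLaurent p).coeff n = p.coeff 0 := by
  rw [coeff_T_mul, sub_self, ← Nat.cast_zero, coeff_toLaurent_natCast]

theorem exists_eq_T_mul_toLaurent {f : R[T;T⁻¹]} {a b : ℤ}
    (hsupp : ∀ m, f.coeff m ≠ 0 → a ≤ m ∧ m ≤ b) (hb : f.coeff b ≠ 0) :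
    ∃ p : R[X], f = T a * toLaurent p ∧ (p.natDegree : ℤ) = b - a := by
  set p := trunc (T (-a) * f)
  have hp : toLaurent p = T (-a) * f := toLaurent_trunc_of_coeff_neg fun m hm => by
    rw [coeff_T_mul]
    by_contra h
    have := (hsupp _ h).1
    omega
  have hcoeff (n : ℕ) : p.coeff n = f.coeff (n + a) := by
    rw [← coeff_toLaurent_natCast, hp, coeff_T_mul, sub_neg_eq_add]
  refine ⟨p, by rw [hp, ← mul_assoc, ← T_add, add_neg_cancel, T_zero, one_mul], ?_⟩
  have hab := (hsupp b hb).1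
  rw [natDegree_eq_of_le_of_coeff_ne_zero (n := (b - a).toNat) ?_ ?_]
  · omega
  · rw [natDegree_le_iff_coeff_eq_zero]
    intro n hn
    rw [hcoeff]
    by_contra h
    have := (hsupp _ h).2
    omega
  · rwa [hcoeff, Int.toNat_of_nonneg (by omega), sub_add_cancel]

end LaurentPolynomial

/-- Let `ℛ` be a finite nonzero commutative ring and `f ∈ ℛ[t^±]` a
Laurent polynomial of positive relative degree (lowest degree `d₋ < d₊` highest degree)
whose highest and lowest degree coefficients are units.  Then there exists `N₀ ∈ ℕ` such that
for every `N ≥ 1` divisible by `N₀` there is `ξ_N ∈ ℛ[t^±]` with `ξ_N * f = 1 - t^N`;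
moreover the highest and lowest degree coefficients of `ξ_N` are units, and the relative
degree of `ξ_N` is strictly less than `N`. -/
theorem stmt14 {ℛ : Type*} [CommRing ℛ] [Finite ℛ] [Nontrivial ℛ]
    (f : LaurentPolynomial ℛ) (dm dp : ℤ) (hdeg : dm < dp)
    (hsupp : ∀ m : ℤ, f.coeff m ≠ 0 → dm ≤ m ∧ m ≤ dp)
    (htop : IsUnit (f.coeff dp)) (hbot : IsUnit (f.coeff dm)) :
    ∃ N₀ : ℕ, 0 < N₀ ∧ ∀ N : ℕ, 0 < N → N₀ ∣ N →
      ∃ ξ : LaurentPolynomial ℛ, ξ * f = 1 - T (N : ℤ) ∧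
        ∃ em ep : ℤ, ep - em < (N : ℤ) ∧
          (∀ m : ℤ, ξ.coeff m ≠ 0 → em ≤ m ∧ m ≤ ep) ∧
          IsUnit (ξ.coeff ep) ∧ IsUnit (ξ.coeff em) := by
  obtain ⟨p, rfl, hpdeg⟩ := exists_eq_T_mul_toLaurent hsupp htop.ne_zero
  rw [show dp = dm + p.natDegree by omega, coeff_T_mul_toLaurent_add_natDegree] at htop
  rw [coeff_T_mul_toLaurent_self] at hbot
  obtain ⟨N₀, hN₀, hdvd⟩ := exists_dvd_X_pow_sub_one htop hbot
  refine ⟨N₀, hN₀, fun N hN hN₀N => ?_⟩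
  obtain ⟨q, hq⟩ := hdvd N hN₀N
  have hqdeg := natDegree_add_natDegree_of_X_pow_sub_one_eq_mul hN htop hq
  have hqlead := IsUnit.of_mul_eq_one_right _
    (leadingCoeff_mul_leadingCoeff_of_X_pow_sub_one_eq_mul hN htop hq)
  refine ⟨T (-dm) * toLaurent (-q), ?_, -dm, -dm + q.natDegree, by omega, fun m hm => ?_, ?_, ?_⟩
  · calc T (-dm) * toLaurent (-q) * (T dm * toLaurent p)
        = -(T (-dm) * T dm) * toLaurent (X ^ N - 1) := by rw [hq, map_neg, map_mul]; ring
      _ = 1 - T N := by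
        rw [← T_add, neg_add_cancel, T_zero, map_sub, map_pow, toLaurent_X, T_pow, mul_one,
          map_one]
        ring
  · simpa only [natDegree_neg] using coeff_T_mul_toLaurent_ne_zero hm
  · rw [← natDegree_neg, coeff_T_mul_toLaurent_add_natDegree, leadingCoeff_neg]
    exact hqlead.neg
  · rw [coeff_T_mul_toLaurent_self, coeff_neg]
    exact (isUnit_coeff_zero_of_X_pow_sub_one_eq_mul hN hq).neg
end

section
/- Let B ∈ M_ℓ(R) be a matrix over R = ℤ_p[t^±] with a dominant diagonal. Then the total degree of det B equals the total degree of the product of the diagonal entries: δ(det B) = δ(∏_i B_{ii}). -/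
namespace Stmt17

/-- `R = ℤ_p[t^±]`. -/
abbrev Ap (p : ℕ) := LaurentPolynomial (ZMod p)

/-- The upper degree `deg₊ f ∈ ℤ ∪ {-∞}` of a Laurent polynomial. -/
noncomputable def degp {p : ℕ} (f : Ap p) : WithBot ℤ := f.coeff.support.max

/-- The lower degree `deg₋ f ∈ ℤ ∪ {∞}` of a Laurent polynomial. -/
noncomputable def degm {p : ℕ} (f : Ap p) : WithTop ℤ := f.coeff.support.min

/-- `δ g <₊ δ f`: `deg₊ g < deg₊ f` and `deg₋ g ≥ deg₋ f`. -/
def LtPlus {p : ℕ} (g f : Ap p) : Prop := degp g < degp f ∧ degm f ≤ degm g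

/-- `δ g <₋ δ f`: `deg₊ g ≤ deg₊ f` and `deg₋ g > deg₋ f`. -/
def LtMinus {p : ℕ} (g f : Ap p) : Prop := degp g ≤ degp f ∧ degm f < degm g

/-- A square matrix over `ℤ_p[t^±]` has a dominant diagonal if its diagonal entries are
nonzero, `δ B_{ij} <₊ δ B_{ii}` for `j > i`, and `δ B_{ij} <₋ δ B_{ii}` for `j < i`. -/
def DominantDiagonal {p ℓ : ℕ} (B : Matrix (Fin ℓ) (Fin ℓ) (Ap p)) : Prop :=
  (∀ i, B i i ≠ 0) ∧
  (∀ i j, i < j → LtPlus (B i j) (B i i)) ∧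
  (∀ i j, j < i → LtMinus (B i j) (B i i))

end Stmt17

/-! Both `deg₊` (read in the reversed order of `ℤ`) and `deg₋` are additive valuations on `R[t^±]`
over a domain `R`: the extreme monomial of a product is the product of the extreme monomials of the
factors. For an additive valuation `v` and a matrix whose diagonal entry has the least valuation in
its row, strictly so somewhere along every non-identity permutation, every non-identity term of the
Leibniz expansion of `det B` has valuation strictly larger than the diagonal term, which therefore
determines `v (det B)`. A dominant diagonal supplies the strict inequality for `deg₊` at an index
with `i < σ i`, and for `deg₋` at an index with `σ i < i`; every permutation `σ ≠ 1` has both. -/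

namespace Equiv.Perm

variable {α : Type*} [Fintype α] [LinearOrder α] {σ : Perm α}

theorem exists_lt_apply_of_ne_one (hσ : σ ≠ 1) : ∃ i, i < σ i := by
  have hs : σ.support.Nonempty := Finset.nonempty_iff_ne_empty.2 (support_eq_empty_iff.not.2 hσ)
  have hmin := σ.support.min'_mem hs
  exact ⟨_, (σ.support.min'_le _ (apply_mem_support.2 hmin)).lt_of_ne' (mem_support.1 hmin)⟩

theorem exists_apply_lt_of_ne_one (hσ : σ ≠ 1) : ∃ i, σ i < i := by
  obtain ⟨i, hi⟩ := exists_lt_apply_of_ne_one (inv_ne_one.2 hσ)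
  exact ⟨σ⁻¹ i, by simpa using hi⟩

end Equiv.Perm

theorem WithTop.sum_lt_sum_of_ne_top {ι M : Type*} [AddCancelCommMonoid M] [LinearOrder M]
    [IsOrderedAddMonoid M] {s : Finset ι} {f g : ι → WithTop M}
    (hf : ∀ i ∈ s, f i ≠ ⊤) (hle : ∀ i ∈ s, f i ≤ g i) (hlt : ∃ i ∈ s, f i < g i) :
    ∑ i ∈ s, f i < ∑ i ∈ s, g i := by
  classical
  obtain ⟨i, hi, hfg⟩ := hlt
  rw [← Finset.add_sum_erase s f hi, ← Finset.add_sum_erase s g hi]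
  have hrest : ∑ j ∈ s.erase i, f j ≠ ⊤ :=
    WithTop.sum_ne_top.2 fun j hj => hf j (Finset.mem_of_mem_erase hj)
  calc f i + ∑ j ∈ s.erase i, f j < g i + ∑ j ∈ s.erase i, f j :=
        WithTop.add_lt_add_right hrest hfg
    _ ≤ g i + ∑ j ∈ s.erase i, g j := by
        gcongr with j hj
        exact hle j (Finset.mem_of_mem_erase hj)

theorem UniqueAdd.of_forall_le {α : Type*} [Add α] [LinearOrder α] [AddLeftStrictMono α]
    [AddRightStrictMono α] {A B : Finset α} {a0 b0 : α}
    (hA : ∀ a ∈ A, a ≤ a0) (hB : ∀ b ∈ B, b ≤ b0) : UniqueAdd A B a0 b0 := by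
  intro a b ha hb he
  have : AddLeftMono α := addLeftMono_of_addLeftStrictMono α
  have : AddRightMono α := addRightMono_of_addRightStrictMono α
  constructor
  · by_contra hne
    exact (add_lt_add_of_lt_of_le ((hA a ha).lt_of_ne hne) (hB b hb)).ne he
  · by_contra hne
    exact (add_lt_add_of_le_of_lt (hA a ha) ((hB b hb).lt_of_ne hne)).ne he

theorem UniqueAdd.of_forall_ge {α : Type*} [Add α] [LinearOrder α] [AddLeftStrictMono α]
    [AddRightStrictMono α] {A B : Finset α} {a0 b0 : α}
    (hA : ∀ a ∈ A, a0 ≤ a) (hB : ∀ b ∈ B, b0 ≤ b) : UniqueAdd A B a0 b0 :=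
  UniqueAdd.of_forall_le (α := αᵒᵈ) hA hB

namespace AddValuation

open Equiv

section Ring

variable {S Γ₀ : Type*} [Ring S] [LinearOrderedAddCommMonoidWithTop Γ₀] (v : AddValuation S Γ₀)

theorem map_units_int_smul (u : ℤˣ) (x : S) : v (u • x) = v x := by
  rcases Int.units_eq_one_or u with rfl | rfl
  · rw [one_smul]
  · rw [Units.neg_smul, one_smul, v.map_neg]

end Ring

variable {S : Type*} [CommRing S]

theorem map_prod {Γ₀ : Type*} [LinearOrderedAddCommMonoidWithTop Γ₀] (v : AddValuation S Γ₀)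
    {ι : Type*} (s : Finset ι) (f : ι → S) : v (∏ i ∈ s, f i) = ∑ i ∈ s, v (f i) := by
  classical
  induction s using Finset.induction_on with
  | empty => simp [v.map_one]
  | insert i s hi ih => rw [Finset.prod_insert hi, Finset.sum_insert hi, v.map_mul, ih]

theorem map_det_eq_map_prod_diag {Γ : Type*} [AddCancelCommMonoid Γ] [LinearOrder Γ]
    [IsOrderedAddMonoid Γ] {n : Type*} [Fintype n] [DecidableEq n]
    (v : AddValuation S (WithTop Γ)) (C : Matrix n n S)
    (hdiag : ∀ i, v (C i i) ≠ ⊤) (hle : ∀ i j, v (C i i) ≤ v (C i j))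
    (hlt : ∀ σ : Perm n, σ ≠ 1 → ∃ i, v (C i i) < v (C i (σ i))) :
    v C.det = v (∏ i, C i i) := by
  have hleibniz : C.det = ∑ σ : Perm n, Perm.sign σ • ∏ i, C i (σ i) := by
    simp [← Matrix.det_transpose C, Matrix.det_apply]
  have hoff : ∀ σ ∈ Finset.univ.erase (1 : Perm n),
      v (∏ i, C i i) < v (Perm.sign σ • ∏ i, C i (σ i)) := by
    intro σ hσ
    rw [v.map_units_int_smul, v.map_prod, v.map_prod]
    obtain ⟨i, hi⟩ := hlt σ (Finset.ne_of_mem_erase hσ)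
    exact WithTop.sum_lt_sum_of_ne_top (fun i _ => hdiag i) (fun i _ => hle i (σ i))
      ⟨i, Finset.mem_univ i, hi⟩
  have hfin : v (∏ i, C i i) ≠ ⊤ := by
    rw [v.map_prod]
    exact WithTop.sum_ne_top.2 fun i _ => hdiag i
  rw [hleibniz, ← Finset.add_sum_erase _ _ (Finset.mem_univ 1), v.map_add_eq_of_lt_left]
  · simp
  · simpa using v.map_lt_sum hfin hoff

end AddValuation

namespace LaurentPolynomial

variable {R : Type*}

section Semiring

variable [Semiring R]

noncomputable def lowerDegree (f : R[T;T⁻¹]) : WithTop ℤ :=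
  f.coeff.support.min

@[simp]
theorem lowerDegree_zero : lowerDegree (0 : R[T;T⁻¹]) = ⊤ :=
  rfl

theorem lowerDegree_eq_top_iff {f : R[T;T⁻¹]} : f.lowerDegree = ⊤ ↔ f = 0 := by
  rw [lowerDegree, Finset.min_eq_top, Finsupp.support_eq_empty, AddMonoidAlgebra.coeff_eq_zero]

theorem degree_one [Nontrivial R] : (1 : R[T;T⁻¹]).degree = 0 := by
  simp [degree]

theorem lowerDegree_one [Nontrivial R] : (1 : R[T;T⁻¹]).lowerDegree = 0 := by
  simp [lowerDegree]

theorem support_coeff_nonempty {f : R[T;T⁻¹]} (hf : f ≠ 0) : f.coeff.support.Nonempty :=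
  Finsupp.support_nonempty_iff.2 (mt AddMonoidAlgebra.coeff_eq_zero.1 hf)

variable [NoZeroDivisors R]

theorem degree_mul (f g : R[T;T⁻¹]) : (f * g).degree = f.degree + g.degree := by
  rcases eq_or_ne f 0 with rfl | hf
  · simp
  rcases eq_or_ne g 0 with rfl | hg
  · simp
  refine le_antisymm
    (AddMonoidAlgebra.sup_support_coeff_mul_le (fun a b => (WithBot.coe_add a b).le) f g) ?_
  obtain ⟨a, ha⟩ := Finset.max_of_nonempty (support_coeff_nonempty hf)
  obtain ⟨b, hb⟩ := Finset.max_of_nonempty (support_coeff_nonempty hg)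
  have hcoeff : (f * g).coeff (a + b) = f.coeff a * g.coeff b :=
    AddMonoidAlgebra.coeff_mul_add_of_uniqueAdd <| UniqueAdd.of_forall_le
      (fun _ h => Finset.le_max_of_eq h ha) (fun _ h => Finset.le_max_of_eq h hb)
  have hmem : a + b ∈ (f * g).coeff.support := by
    rw [Finsupp.mem_support_iff, hcoeff]
    exact mul_ne_zero (Finsupp.mem_support_iff.1 (Finset.mem_of_max ha))
      (Finsupp.mem_support_iff.1 (Finset.mem_of_max hb))
  unfold degree
  rw [ha, hb, ← WithBot.coe_add]
  exact Finset.le_max hmem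

theorem lowerDegree_mul (f g : R[T;T⁻¹]) :
    (f * g).lowerDegree = f.lowerDegree + g.lowerDegree := by
  rcases eq_or_ne f 0 with rfl | hf
  · simp
  rcases eq_or_ne g 0 with rfl | hg
  · simp
  refine le_antisymm ?_
    (AddMonoidAlgebra.le_inf_support_coeff_mul (fun a b => (WithTop.coe_add a b).ge) f g)
  obtain ⟨a, ha⟩ := Finset.min_of_nonempty (support_coeff_nonempty hf)
  obtain ⟨b, hb⟩ := Finset.min_of_nonempty (support_coeff_nonempty hg)
  have hcoeff : (f * g).coeff (a + b) = f.coeff a * g.coeff b :=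
    AddMonoidAlgebra.coeff_mul_add_of_uniqueAdd <| UniqueAdd.of_forall_ge
      (fun _ h => Finset.min_le_of_eq h ha) (fun _ h => Finset.min_le_of_eq h hb)
  have hmem : a + b ∈ (f * g).coeff.support := by
    rw [Finsupp.mem_support_iff, hcoeff]
    exact mul_ne_zero (Finsupp.mem_support_iff.1 (Finset.mem_of_min ha))
      (Finsupp.mem_support_iff.1 (Finset.mem_of_min hb))
  unfold lowerDegree
  rw [ha, hb, ← WithTop.coe_add]
  exact Finset.min_le hmem

end Semiring

variable [Ring R] [IsDomain R]

noncomputable def lowerDegreeValuation : AddValuation R[T;T⁻¹] (WithTop ℤ) :=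
  AddValuation.of lowerDegree rfl lowerDegree_one
    (fun f g => AddMonoidAlgebra.le_inf_support_coeff_add _ f g) lowerDegree_mul

theorem lowerDegreeValuation_ne_top {f : R[T;T⁻¹]} (hf : f ≠ 0) : lowerDegreeValuation f ≠ ⊤ :=
  lowerDegree_eq_top_iff.not.2 hf

noncomputable def degreeValuation : AddValuation R[T;T⁻¹] (WithTop ℤᵒᵈ) :=
  AddValuation.of (fun f => WithBot.toDual f.degree) rfl (by rw [degree_one]; rfl)
    (fun f g => by
      have hanti : Antitone (WithBot.toDual : WithBot ℤ → WithTop ℤᵒᵈ) :=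
        fun _ _ => WithBot.toDual_le_toDual_iff.2
      rw [← hanti.map_max]
      exact WithBot.toDual_le_toDual_iff.2 (AddMonoidAlgebra.sup_support_coeff_add_le _ f g))
    (fun f g => by rw [degree_mul]; cases f.degree <;> cases g.degree <;> rfl)

theorem degreeValuation_apply (f : R[T;T⁻¹]) : degreeValuation f = WithBot.toDual f.degree :=
  rfl

theorem degreeValuation_le_degreeValuation_iff {f g : R[T;T⁻¹]} :
    degreeValuation f ≤ degreeValuation g ↔ g.degree ≤ f.degree := by
  rw [degreeValuation_apply, degreeValuation_apply, WithBot.toDual_le_toDual_iff]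

theorem degreeValuation_lt_degreeValuation_iff {f g : R[T;T⁻¹]} :
    degreeValuation f < degreeValuation g ↔ g.degree < f.degree := by
  simp only [lt_iff_not_ge, degreeValuation_le_degreeValuation_iff]

theorem degreeValuation_ne_top {f : R[T;T⁻¹]} (hf : f ≠ 0) : degreeValuation f ≠ ⊤ :=
  WithBot.toDual.injective.ne (degree_eq_bot_iff.not.2 hf)

end LaurentPolynomial

namespace Stmt17

open LaurentPolynomial

variable {p ℓ : ℕ} {B : Matrix (Fin ℓ) (Fin ℓ) (Ap p)}

theorem DominantDiagonal.degp_le (hB : DominantDiagonal B) (i j : Fin ℓ) :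
    degp (B i j) ≤ degp (B i i) := by
  rcases lt_trichotomy i j with h | rfl | h
  exacts [(hB.2.1 i j h).1.le, le_rfl, (hB.2.2 i j h).1]

theorem DominantDiagonal.degm_le (hB : DominantDiagonal B) (i j : Fin ℓ) :
    degm (B i i) ≤ degm (B i j) := by
  rcases lt_trichotomy i j with h | rfl | h
  exacts [(hB.2.1 i j h).2, le_rfl, (hB.2.2 i j h).2.le]

/-- Let `B ∈ M_ℓ(R)` be a matrix over `R = ℤ_p[t^±]` (`p` prime) with a
dominant diagonal.  Then the total degree of `det B` equals the total degree of the product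
of the diagonal entries: `δ (det B) = δ (∏ᵢ B_{ii})`. -/
theorem stmt17 (p : ℕ) (hp : p.Prime) (ℓ : ℕ)
    (B : Matrix (Fin ℓ) (Fin ℓ) (Ap p)) (hB : DominantDiagonal B) :
    degp B.det = degp (∏ i, B i i) ∧ degm B.det = degm (∏ i, B i i) := by
  have : Fact p.Prime := ⟨hp⟩
  -- `degp` and `degm` are definitionally `LaurentPolynomial.degree` and `lowerDegree`.
  constructor
  · apply WithBot.toDual.injective
    refine degreeValuation.map_det_eq_map_prod_diag B (fun i => degreeValuation_ne_top (hB.1 i))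
      (fun i j => degreeValuation_le_degreeValuation_iff.2 (hB.degp_le i j)) fun σ hσ => ?_
    obtain ⟨i, hi⟩ := σ.exists_lt_apply_of_ne_one hσ
    exact ⟨i, degreeValuation_lt_degreeValuation_iff.2 (hB.2.1 i (σ i) hi).1⟩
  · refine lowerDegreeValuation.map_det_eq_map_prod_diag B
      (fun i => lowerDegreeValuation_ne_top (hB.1 i)) hB.degm_le fun σ hσ => ?_
    obtain ⟨i, hi⟩ := σ.exists_apply_lt_of_ne_one hσ
    exact ⟨i, (hB.2.2 i (σ i) hi).2⟩

end Stmt17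
end

section
/- Let B ∈ M_ℓ(R) over R = ℤ_p[t^±] be Hermitian (B = B†, where † is transpose composed with the involution t ↦ t⁻¹) and have a dominant diagonal. Then for any vector v ∈ R^ℓ there exist q, w ∈ R^ℓ with v = Bq + w and δw_i <₊ δB_{ii} for all i (division with remainder). -/
open LaurentPolynomial

namespace Stmt18

/-- `R = ℤ_p[t^±]`. -/
abbrev Ap (p : ℕ) := LaurentPolynomial (ZMod p)

/-- The upper degree `deg₊ f ∈ ℤ ∪ {-∞}` of a Laurent polynomial. -/
noncomputable def degp {p : ℕ} (f : Ap p) : WithBot ℤ := f.coeff.support.max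

/-- The lower degree `deg₋ f ∈ ℤ ∪ {∞}` of a Laurent polynomial. -/
noncomputable def degm {p : ℕ} (f : Ap p) : WithTop ℤ := f.coeff.support.min

/-- `δ g <₊ δ f`: `deg₊ g < deg₊ f` and `deg₋ g ≥ deg₋ f`. -/
def LtPlus {p : ℕ} (g f : Ap p) : Prop := degp g < degp f ∧ degm f ≤ degm g

/-- `δ g <₋ δ f`: `deg₊ g ≤ deg₊ f` and `deg₋ g > deg₋ f`. -/
def LtMinus {p : ℕ} (g f : Ap p) : Prop := degp g ≤ degp f ∧ degm f < degm g

/-- A square matrix over `ℤ_p[t^±]` has a dominant diagonal if its diagonal entries are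
nonzero, `δ B_{ij} <₊ δ B_{ii}` for `j > i`, and `δ B_{ij} <₋ δ B_{ii}` for `j < i`. -/
def DominantDiagonal {p ℓ : ℕ} (B : Matrix (Fin ℓ) (Fin ℓ) (Ap p)) : Prop :=
  (∀ i, B i i ≠ 0) ∧
  (∀ i j, i < j → LtPlus (B i j) (B i i)) ∧
  (∀ i j, j < i → LtMinus (B i j) (B i i))

/-!
Let `d i` and `e i` be the upper and lower degrees of `B i i`. Dominance puts row `j` of `B` in
degrees `[e j, d j]` and makes `coeffMatrix B d` lower and `coeffMatrix B e` upper triangular with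
nonzero diagonal, hence invertible over `ℤ_p`. Subtracting `B *ᵥ (a • T s)`, with `a` solving the
linear system of `coeffMatrix B d`, kills the coefficient of `t ^ (d j + s)` in every row `j` at
once without creating higher terms; running `s` down to `0` brings each remainder entry `w j` below
degree `d j`. The same with `coeffMatrix B e` for `s = -1, -2, …` lifts the lower degrees up to
`e j`, and since `s < 0` no term of degree `≥ d j` reappears.
-/

open Matrix

def coeffMatrix {R ι : Type*} [Semiring R] (B : Matrix ι ι R[T;T⁻¹]) (c : ι → ℤ) : Matrix ι ι R :=
  Matrix.of fun j i => (B j i).coeff (c j)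

theorem exists_coeff_eq_zero_of_le {R ι : Type*} [Semiring R] [Finite ι] (v : ι → R[T;T⁻¹]) :
    ∃ M : ℤ, ∀ i m, M ≤ m → (v i).coeff m = 0 := by
  obtain ⟨M, hM⟩ := (Set.finite_iUnion fun i => (v i).coeff.support.finite_toSet).bddAbove
  refine ⟨M + 1, fun i m hm => by_contra fun h => ?_⟩
  have := hM (Set.mem_iUnion.2 ⟨i, Finsupp.mem_support_iff.2 h⟩)
  omega

theorem exists_coeff_eq_zero_of_lt {R ι : Type*} [Semiring R] [Finite ι] (v : ι → R[T;T⁻¹]) :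
    ∃ M : ℤ, ∀ i m, m < M → (v i).coeff m = 0 := by
  obtain ⟨M, hM⟩ := (Set.finite_iUnion fun i => (v i).coeff.support.finite_toSet).bddBelow
  refine ⟨M, fun i m hm => by_contra fun h => ?_⟩
  have := hM (Set.mem_iUnion.2 ⟨i, Finsupp.mem_support_iff.2 h⟩)
  omega

section Formula

variable {R ι : Type*} [Ring R] [Fintype ι]

theorem coeff_sub_mulVec_C_mul_T (B : Matrix ι ι R[T;T⁻¹]) (v : ι → R[T;T⁻¹]) (a : ι → R)
    (s m : ℤ) (j : ι) :
    ((v - B *ᵥ fun i => C (a i) * T s) j).coeff m =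
      (v j).coeff m - ∑ i, (B j i).coeff (m - s) * a i := by
  simp [Matrix.mulVec, dotProduct, ← single_eq_C_mul_T, AddMonoidAlgebra.coeff_sum, sub_eq_add_neg]

theorem coeff_sub_mulVec_C_mul_T_self {B : Matrix ι ι R[T;T⁻¹]} {c : ι → ℤ}
    {v : ι → R[T;T⁻¹]} {a : ι → R} {s : ℤ}
    (ha : coeffMatrix B c *ᵥ a = fun j => (v j).coeff (c j + s)) (j : ι) :
    ((v - B *ᵥ fun i => C (a i) * T s) j).coeff (c j + s) = 0 := by
  rw [coeff_sub_mulVec_C_mul_T, add_sub_cancel_right, ← congrFun ha j]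
  simp [Matrix.mulVec, dotProduct, coeffMatrix]

theorem coeff_sub_mulVec_C_mul_T_eq_zero {B : Matrix ι ι R[T;T⁻¹]} {v : ι → R[T;T⁻¹]}
    {a : ι → R} {s m : ℤ} {j : ι} (hv : (v j).coeff m = 0)
    (hB : ∀ i, (B j i).coeff (m - s) = 0) :
    ((v - B *ᵥ fun i => C (a i) * T s) j).coeff m = 0 := by
  rw [coeff_sub_mulVec_C_mul_T, hv]
  simp [hB]

end Formula

section Reduction

variable {R ι : Type*} [CommRing R] [Fintype ι] [DecidableEq ι]
variable {B : Matrix ι ι R[T;T⁻¹]} {d e : ι → ℤ}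

theorem exists_coeff_sub_mulVec_eq_zero_of_le (hBd : ∀ j i m, d j < m → (B j i).coeff m = 0)
    (hd : IsUnit (coeffMatrix B d)) (v : ι → R[T;T⁻¹]) :
    ∃ q, ∀ i m, d i ≤ m → ((v - B *ᵥ q) i).coeff m = 0 := by
  suffices key : ∀ n : ℕ, ∀ v : ι → R[T;T⁻¹], (∀ i m, d i + n ≤ m → (v i).coeff m = 0) →
      ∃ q, ∀ i m, d i ≤ m → ((v - B *ᵥ q) i).coeff m = 0 by
    obtain ⟨M, hM⟩ := exists_coeff_eq_zero_of_le v
    obtain ⟨n, hn⟩ := Finite.exists_le fun i => (M - d i).toNat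
    exact key n v fun i m hm => hM i m (by have := hn i; omega)
  intro n
  induction n with
  | zero => exact fun v hv => ⟨0, by simpa using hv⟩
  | succ n ih =>
    intro v hv
    obtain ⟨a, ha⟩ := mulVec_surjective_iff_isUnit.2 hd fun j => (v j).coeff (d j + n)
    obtain ⟨q, hq⟩ := ih (v - B *ᵥ fun i => C (a i) * T n) fun j m hm => by
      obtain rfl | hlt := hm.eq_or_lt
      · exact coeff_sub_mulVec_C_mul_T_self ha j
      · exact coeff_sub_mulVec_C_mul_T_eq_zero (hv j m (by push_cast; omega))
          fun i => hBd j i _ (by omega)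
    exact ⟨_ + q, by rwa [mulVec_add, sub_add_eq_sub_sub]⟩

theorem exists_coeff_sub_mulVec_eq_zero_of_lt (hBd : ∀ j i m, d j < m → (B j i).coeff m = 0)
    (hBe : ∀ j i m, m < e j → (B j i).coeff m = 0) (he : IsUnit (coeffMatrix B e))
    {v : ι → R[T;T⁻¹]} (hv : ∀ i m, d i ≤ m → (v i).coeff m = 0) :
    ∃ q, (∀ i m, d i ≤ m → ((v - B *ᵥ q) i).coeff m = 0) ∧
      ∀ i m, m < e i → ((v - B *ᵥ q) i).coeff m = 0 := by
  suffices key : ∀ n : ℕ, ∀ v : ι → R[T;T⁻¹], (∀ i m, d i ≤ m → (v i).coeff m = 0) →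
      (∀ i m, m < e i - n → (v i).coeff m = 0) →
      ∃ q, (∀ i m, d i ≤ m → ((v - B *ᵥ q) i).coeff m = 0) ∧
        ∀ i m, m < e i → ((v - B *ᵥ q) i).coeff m = 0 by
    obtain ⟨M, hM⟩ := exists_coeff_eq_zero_of_lt v
    obtain ⟨n, hn⟩ := Finite.exists_le fun i => (e i - M).toNat
    exact key n v hv fun i m hm => hM i m (by have := hn i; omega)
  intro n
  induction n with
  | zero => exact fun v hvd hve => ⟨0, by simpa using hvd, by simpa using hve⟩
  | succ n ih =>
    intro v hvd hve
    obtain ⟨a, ha⟩ := mulVec_surjective_iff_isUnit.2 he fun j => (v j).coeff (e j + -(n + 1))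
    obtain ⟨q, hqd, hqe⟩ := ih (v - B *ᵥ fun i => C (a i) * T (-(n + 1)))
      (fun j m hm => coeff_sub_mulVec_C_mul_T_eq_zero (hvd j m hm) fun i => hBd j i _ (by omega))
      fun j m hm => by
        obtain hlt | heq := (show m ≤ e j + -(n + 1) by omega).lt_or_eq
        · exact coeff_sub_mulVec_C_mul_T_eq_zero (hve j m (by push_cast; omega))
            fun i => hBe j i _ (by omega)
        · exact heq ▸ coeff_sub_mulVec_C_mul_T_self ha j
    exact ⟨_ + q, by rw [mulVec_add, sub_add_eq_sub_sub]; exact ⟨hqd, hqe⟩⟩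

end Reduction

section Degrees

variable {p : ℕ} {f : Ap p} {c : ℤ}

theorem degp_le_iff : degp f ≤ c ↔ ∀ m, c < m → f.coeff m = 0 := by
  simp only [degp, Finset.max_eq_sup_withBot, Finset.sup_le_iff, Finsupp.mem_support_iff,
    WithBot.coe_le_coe]
  exact forall_congr' fun m => by rw [not_imp_comm, not_le]

theorem degp_lt_iff : degp f < c ↔ ∀ m, c ≤ m → f.coeff m = 0 := by
  simp only [degp, Finset.max_eq_sup_withBot, Finset.sup_lt_iff (WithBot.bot_lt_coe c),
    Finsupp.mem_support_iff, WithBot.coe_lt_coe]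
  exact forall_congr' fun m => by rw [not_imp_comm, not_lt]

theorem le_degm_iff : (c : WithTop ℤ) ≤ degm f ↔ ∀ m, m < c → f.coeff m = 0 := by
  simp only [degm, Finset.le_min_iff, Finsupp.mem_support_iff, WithTop.coe_le_coe]
  exact forall_congr' fun m => by rw [not_imp_comm, not_le]

theorem lt_degm_iff : (c : WithTop ℤ) < degm f ↔ ∀ m, m ≤ c → f.coeff m = 0 := by
  simp only [degm, Finset.min_eq_inf_withTop, Finset.lt_inf_iff (WithTop.coe_lt_top c),
    Finsupp.mem_support_iff, WithTop.coe_lt_coe]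
  exact forall_congr' fun m => by rw [not_imp_comm, not_lt]

theorem exists_degp_eq (hf : f ≠ 0) : ∃ d : ℤ, degp f = d :=
  WithBot.ne_bot_iff_exists.1 (degree_eq_bot_iff.not.2 hf) |>.imp fun _ => Eq.symm

theorem exists_degm_eq (hf : f ≠ 0) : ∃ e : ℤ, degm f = e :=
  Finset.min_of_nonempty (Finsupp.support_nonempty_iff.2 fun h => hf (by ext; simp [h]))

theorem coeff_ne_zero_of_degp_eq (h : degp f = c) : f.coeff c ≠ 0 :=
  Finsupp.mem_support_iff.1 (Finset.mem_of_max h)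

theorem coeff_ne_zero_of_degm_eq (h : degm f = c) : f.coeff c ≠ 0 :=
  Finsupp.mem_support_iff.1 (Finset.mem_of_min h)

end Degrees

namespace DominantDiagonal

variable {p ℓ : ℕ} {B : Matrix (Fin ℓ) (Fin ℓ) (Ap p)} {d e : Fin ℓ → ℤ}

theorem coeff_eq_zero_of_lt (hB : DominantDiagonal B) (hd : ∀ i, degp (B i i) = d i) :
    ∀ j i m, d j < m → (B j i).coeff m = 0 := by
  intro j i
  rw [← degp_le_iff, ← hd]
  rcases lt_trichotomy j i with hji | rfl | hij
  · exact (hB.2.1 j i hji).1.le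
  · exact le_rfl
  · exact (hB.2.2 j i hij).1

theorem coeff_eq_zero_of_gt (hB : DominantDiagonal B) (he : ∀ i, degm (B i i) = e i) :
    ∀ j i m, m < e j → (B j i).coeff m = 0 := by
  intro j i
  rw [← le_degm_iff, ← he]
  rcases lt_trichotomy j i with hji | rfl | hij
  · exact (hB.2.1 j i hji).2
  · exact le_rfl
  · exact (hB.2.2 j i hij).2.le

theorem isUnit_coeffMatrix_degp [Fact p.Prime] (hB : DominantDiagonal B)
    (hd : ∀ i, degp (B i i) = d i) : IsUnit (coeffMatrix B d) := by
  rw [isUnit_iff_isUnit_det, det_of_isLowerTriangular (coeffMatrix B d) fun j i (hji : j < i) =>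
    degp_lt_iff.1 (hd j ▸ (hB.2.1 j i hji).1) _ le_rfl]
  exact (Finset.prod_ne_zero_iff.2 fun i _ => coeff_ne_zero_of_degp_eq (hd i)).isUnit

theorem isUnit_coeffMatrix_degm [Fact p.Prime] (hB : DominantDiagonal B)
    (he : ∀ i, degm (B i i) = e i) : IsUnit (coeffMatrix B e) := by
  rw [isUnit_iff_isUnit_det, det_of_isUpperTriangular (M := coeffMatrix B e)
    fun j i (hij : i < j) => lt_degm_iff.1 (he j ▸ (hB.2.2 j i hij).2) _ le_rfl]
  exact (Finset.prod_ne_zero_iff.2 fun i _ => coeff_ne_zero_of_degm_eq (he i)).isUnit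

end DominantDiagonal

theorem stmt18_general (p : ℕ) (hp : p.Prime) (ℓ : ℕ)
    (B : Matrix (Fin ℓ) (Fin ℓ) (Ap p))
    (hdd : DominantDiagonal B)
    (v : Fin ℓ → Ap p) :
    ∃ q w : Fin ℓ → Ap p, v = B.mulVec q + w ∧ ∀ i, LtPlus (w i) (B i i) := by
  have : Fact p.Prime := ⟨hp⟩
  choose d hd using fun i => exists_degp_eq (hdd.1 i)
  choose e he using fun i => exists_degm_eq (hdd.1 i)
  have hBd := hdd.coeff_eq_zero_of_lt hd
  obtain ⟨q₁, hq₁⟩ := exists_coeff_sub_mulVec_eq_zero_of_le hBd (hdd.isUnit_coeffMatrix_degp hd) v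
  obtain ⟨q₂, hq₂d, hq₂e⟩ := exists_coeff_sub_mulVec_eq_zero_of_lt hBd
    (hdd.coeff_eq_zero_of_gt he) (hdd.isUnit_coeffMatrix_degm he) hq₁
  refine ⟨q₁ + q₂, v - B *ᵥ (q₁ + q₂), (add_sub_cancel _ _).symm, fun i => ⟨?_, ?_⟩⟩ <;>
    rw [mulVec_add, ← sub_sub]
  · exact hd i ▸ degp_lt_iff.2 (hq₂d i)
  · exact he i ▸ le_degm_iff.2 (hq₂e i)

/-- Let `B ∈ M_ℓ(R)` over `R = ℤ_p[t^±]` be Hermitian (`B = B†`, the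
transpose composed with the involution `t ↦ t⁻¹`) with a dominant diagonal.  Then for any
vector `v ∈ R^ℓ` there exist `q, w ∈ R^ℓ` with `v = B q + w` and `δ w_i <₊ δ B_{ii}` for all
`i` (division with remainder). -/
theorem stmt18 (p : ℕ) (hp : p.Prime) (ℓ : ℕ)
    (B : Matrix (Fin ℓ) (Fin ℓ) (Ap p))
    (hherm : ∀ i j, B i j = invert (B j i))
    (hdd : DominantDiagonal B)
    (v : Fin ℓ → Ap p) :
    ∃ q w : Fin ℓ → Ap p, v = B.mulVec q + w ∧ ∀ i, LtPlus (w i) (B i i) :=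
  stmt18_general p hp ℓ B hdd v

end Stmt18
end
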